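/- arXiv:2603.08672 — 11 statements merged into one kernel-verified Lean document; each statement's English description precedes it below -/
import Mathlib

section
/- Suppose f : 2^E → ℝ is submodular with f(∅) = 0 and f(S) ≥ 0 for all S ⊆ E, and suppose d ∈ ℝ^n has at least one strictly positive coordinate. Then sup{λ ∈ ℝ : λ ≥ 0 and λ·d ∈ P(f)} = inf{F(x) : x ∈ ℝ^n, x ≥ 0 coordinatewise, ⟨d, x⟩ = 1} (line search duality: the line search problem over the extended polymatroid is dual to minimizing the Lovász extension over the hyperplane ⟨d,x⟩ = 1 intersected with the nonnegative orthant). -/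
open Finset

/-- `f : 2^E → ℝ` is submodular if `f(S ∩ T) + f(S ∪ T) ≤ f(S) + f(T)` for all `S, T`. -/
def Submodular {m : ℕ} (f : Finset (Fin m) → ℝ) : Prop :=
  ∀ S T : Finset (Fin m), f (S ∩ T) + f (S ∪ T) ≤ f S + f T

/-- The extended polymatroid `P(f) = {x : x(S) ≤ f(S) for all S}`. -/
def extPolymatroid {m : ℕ} (f : Finset (Fin m) → ℝ) : Set (Fin m → ℝ) :=
  {x | ∀ S : Finset (Fin m), ∑ i ∈ S, x i ≤ f S}

/-- The base polytope `B(f) = {x ∈ P(f) : x(E) = f(E)}`. -/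
def basePoly {m : ℕ} (f : Finset (Fin m) → ℝ) : Set (Fin m → ℝ) :=
  {x | (∀ S : Finset (Fin m), ∑ i ∈ S, x i ≤ f S) ∧ ∑ i, x i = f univ}

/-- The Lovász extension `F(x) = sup {⟨v, x⟩ : v ∈ B(f)}`. -/
noncomputable def lovasz {m : ℕ} (f : Finset (Fin m) → ℝ) (x : Fin m → ℝ) : ℝ :=
  sSup ((fun v : Fin m → ℝ => ∑ i, v i * x i) '' basePoly f)

section Greedy

variable {n : ℕ}

/-- prefix set of the first `k` elements in the order given by `σ`. -/
def gU (σ : Equiv.Perm (Fin n)) (k : ℕ) : Finset (Fin n) :=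
  Finset.univ.filter fun i => ((σ.symm i : ℕ) < k)

lemma mem_gU {σ : Equiv.Perm (Fin n)} {k : ℕ} {i : Fin n} :
    i ∈ gU σ k ↔ (σ.symm i : ℕ) < k := by simp [gU]

lemma gU_zero (σ : Equiv.Perm (Fin n)) : gU σ 0 = ∅ := by
  ext i; simp [mem_gU]

lemma gU_top (σ : Equiv.Perm (Fin n)) : gU σ n = univ := by
  ext i; simp [mem_gU, (σ.symm i).isLt]

lemma notMem_gU (σ : Equiv.Perm (Fin n)) (k : Fin n) : σ k ∉ gU σ (k : ℕ) := by
  simp [mem_gU]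

lemma gU_succ (σ : Equiv.Perm (Fin n)) (k : Fin n) :
    gU σ ((k : ℕ) + 1) = insert (σ k) (gU σ (k : ℕ)) := by
  ext i
  simp only [mem_gU, Finset.mem_insert, Nat.lt_succ_iff_lt_or_eq]
  constructor
  · rintro (h | h)
    · exact Or.inr h
    · left
      have hk : σ.symm i = k := Fin.ext h
      rw [← hk, Equiv.apply_symm_apply]
  · rintro (h | h)
    · right; subst h; simp
    · exact Or.inl h

/-- The greedy vertex of the base polytope associated with the order `σ`. -/
noncomputable def gb (f : Finset (Fin n) → ℝ) (σ : Equiv.Perm (Fin n)) : Fin n → ℝ :=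
  fun i => f (gU σ ((σ.symm i : ℕ) + 1)) - f (gU σ (σ.symm i : ℕ))

lemma gb_apply_perm (f : Finset (Fin n) → ℝ) (σ : Equiv.Perm (Fin n)) (k : Fin n) :
    gb f σ (σ k) = f (gU σ ((k : ℕ) + 1)) - f (gU σ (k : ℕ)) := by
  simp [gb]

lemma gb_sum_le (f : Finset (Fin n) → ℝ) (hsub : Submodular f) (hf0 : f ∅ = 0)
    (σ : Equiv.Perm (Fin n)) (S : Finset (Fin n)) :
    ∑ i ∈ S, gb f σ i ≤ f S := by
  induction S using Finset.strongInduction with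
  | _ S ih =>
    rcases S.eq_empty_or_nonempty with rfl | hS
    · simp [hf0]
    · obtain ⟨a, haS, hmax⟩ := S.exists_max_image (fun i => (σ.symm i : ℕ)) hS
      set t : ℕ := (σ.symm a : ℕ) with ht
      set S' : Finset (Fin n) := S.erase a with hS'
      have hss : S' ⊂ S := Finset.erase_ssubset haS
      have ihS' := ih S' hss
      have hsubU : S' ⊆ gU σ t := by
        intro j hj
        have hjS : j ∈ S := Finset.mem_of_mem_erase hj
        have hne : j ≠ a := Finset.ne_of_mem_erase hj
        have hle : (σ.symm j : ℕ) ≤ t := hmax j hjS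
        have hne2 : (σ.symm j : ℕ) ≠ t := by
          intro hcon
          exact hne (σ.symm.injective (Fin.ext hcon))
        exact mem_gU.2 (lt_of_le_of_ne hle hne2)
      have hanot : a ∉ gU σ t := by simp [mem_gU, ht]
      have hcap : S ∩ gU σ t = S' := by
        ext j
        simp only [Finset.mem_inter, hS', Finset.mem_erase]
        constructor
        · rintro ⟨hjS, hjU⟩
          exact ⟨fun hcon => hanot (hcon ▸ hjU), hjS⟩
        · rintro ⟨hne, hjS⟩
          exact ⟨hjS, hsubU (Finset.mem_erase.2 ⟨hne, hjS⟩)⟩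
      have hSa : S = insert a S' := (Finset.insert_erase haS).symm
      have hcup : S ∪ gU σ t = gU σ (t + 1) := by
        have h1 : gU σ (t + 1) = insert a (gU σ t) := by
          have h2 := gU_succ σ (σ.symm a)
          simpa [ht] using h2
        rw [h1, hSa, Finset.insert_union]
        congr 1
        exact Finset.union_eq_right.2 hsubU
      have hsm := hsub S (gU σ t)
      rw [hcap, hcup] at hsm
      have hsum : ∑ i ∈ S, gb f σ i = gb f σ a + ∑ i ∈ S', gb f σ i := by
        rw [hSa, Finset.sum_insert (Finset.notMem_erase a S)]
      have hgb : gb f σ a = f (gU σ (t + 1)) - f (gU σ t) := rfl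
      rw [hsum, hgb]
      linarith

lemma gb_mem_basePoly (f : Finset (Fin n) → ℝ) (hsub : Submodular f) (hf0 : f ∅ = 0)
    (σ : Equiv.Perm (Fin n)) : gb f σ ∈ basePoly f := by
  constructor
  · exact fun S => gb_sum_le f hsub hf0 σ S
  · have h1 : ∑ i, gb f σ i = ∑ k : Fin n, gb f σ (σ k) := (Equiv.sum_comp σ (gb f σ)).symm
    rw [h1]
    rw [Finset.sum_congr rfl (fun k _ => gb_apply_perm f σ k)]
    rw [Fin.sum_univ_eq_sum_range (fun m => f (gU σ (m + 1)) - f (gU σ m)) n]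
    rw [Finset.sum_range_sub (fun m => f (gU σ m)) n]
    simp [gU_top, gU_zero, hf0]

lemma abel_nonneg (g y : ℕ → ℝ) (hg0 : g 0 = 0) (hg : ∀ k, 0 ≤ g k)
    (hy : ∀ k, y (k + 1) ≤ y k) (m : ℕ) :
    g m * y m ≤ ∑ k ∈ Finset.range m, (g (k + 1) - g k) * y k := by
  induction m with
  | zero => simp [hg0]
  | succ p ih =>
    rw [Finset.sum_range_succ]
    have h1 : g (p + 1) * y (p + 1) ≤ g (p + 1) * y p :=
      mul_le_mul_of_nonneg_left (hy p) (hg _)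
    nlinarith

/-- Key greedy/Abel inequality: if `l·d ∈ P(f)` then some base `b` satisfies
`l ⟨d,x⟩ ≤ ⟨b,x⟩` for any nonnegative `x`. -/
lemma greedy_dominates (f : Finset (Fin n) → ℝ) (hsub : Submodular f) (hf0 : f ∅ = 0)
    (d : Fin n → ℝ) (x : Fin n → ℝ) (hx : ∀ i, 0 ≤ x i)
    (l : ℝ) (hl : (fun i => l * d i) ∈ extPolymatroid f) :
    ∃ b ∈ basePoly f, l * ∑ i, d i * x i ≤ ∑ i, b i * x i := by
  classical
  set σ : Equiv.Perm (Fin n) := Tuple.sort (fun i => -x i) with hσ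
  refine ⟨gb f σ, gb_mem_basePoly f hsub hf0 σ, ?_⟩
  set g : ℕ → ℝ := fun k => f (gU σ k) - ∑ i ∈ gU σ k, l * d i with hg
  set y : ℕ → ℝ := fun k => if h : k < n then x (σ ⟨k, h⟩) else 0 with hy
  have hmono : Monotone ((fun i => -x i) ∘ σ) := Tuple.monotone_sort (fun i => -x i)
  have hanti : ∀ j j' : Fin n, j ≤ j' → x (σ j') ≤ x (σ j) := by
    intro j j' hjj
    have := hmono hjj
    simp only [Function.comp_apply] at this
    linarith
  have hg0 : g 0 = 0 := by simp [hg, gU_zero, hf0]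
  have hgnn : ∀ k, 0 ≤ g k := by
    intro k
    have := hl (gU σ k)
    simp only [hg]
    linarith [hl (gU σ k)]
  have hystep : ∀ k, y (k + 1) ≤ y k := by
    intro k
    simp only [hy]
    by_cases h1 : k + 1 < n
    · have h2 : k < n := Nat.lt_of_succ_lt h1
      rw [dif_pos h1, dif_pos h2]
      exact hanti ⟨k, h2⟩ ⟨k + 1, h1⟩ (by simp [Fin.le_def])
    · rw [dif_neg h1]
      by_cases h2 : k < n
      · rw [dif_pos h2]; exact hx _
      · rw [dif_neg h2]
  have habel := abel_nonneg g y hg0 hgnn hystep n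
  have hyn : y n = 0 := by simp [hy]
  have hkey : ∑ k ∈ Finset.range n, (g (k + 1) - g k) * y k
      = ∑ i, (gb f σ i - l * d i) * x i := by
    have hterm : ∀ k : Fin n, (g ((k : ℕ) + 1) - g (k : ℕ)) * y (k : ℕ)
        = (gb f σ (σ k) - l * d (σ k)) * x (σ k) := by
      intro k
      have hins : gU σ ((k : ℕ) + 1) = insert (σ k) (gU σ (k : ℕ)) := gU_succ σ k
      have hnot : σ k ∉ gU σ (k : ℕ) := notMem_gU σ k
      have hgd : g ((k : ℕ) + 1) - g (k : ℕ) = gb f σ (σ k) - l * d (σ k) := by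
        simp only [hg, hins, Finset.sum_insert hnot, gb_apply_perm f σ k, hins]
        ring
      have hyk : y (k : ℕ) = x (σ k) := by
        simp only [hy]
        rw [dif_pos k.isLt]
      rw [hgd, hyk]
    calc ∑ k ∈ Finset.range n, (g (k + 1) - g k) * y k
        = ∑ k : Fin n, (g ((k : ℕ) + 1) - g (k : ℕ)) * y (k : ℕ) :=
          (Fin.sum_univ_eq_sum_range (fun m => (g (m + 1) - g m) * y m) n).symm
      _ = ∑ k : Fin n, (gb f σ (σ k) - l * d (σ k)) * x (σ k) :=
          Finset.sum_congr rfl (fun k _ => hterm k)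
      _ = ∑ i, (gb f σ i - l * d i) * x i :=
          Equiv.sum_comp σ (fun i => (gb f σ i - l * d i) * x i)
  have h0 : 0 ≤ ∑ i, (gb f σ i - l * d i) * x i := by
    rw [← hkey]
    have : (0 : ℝ) = g n * y n := by rw [hyn]; ring
    linarith [habel, mul_nonneg (hgnn n) (le_of_eq hyn.symm)]
  have hexpand : ∑ i, (gb f σ i - l * d i) * x i
      = (∑ i, gb f σ i * x i) - l * ∑ i, d i * x i := by
    rw [Finset.mul_sum, ← Finset.sum_sub_distrib]
    exact Finset.sum_congr rfl (fun i _ => by ring)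
  linarith [h0, hexpand ▸ h0]

end Greedy

/-- **Line search duality.** For a nonnegative submodular `f` with `f ∅ = 0` and a direction
`d` with at least one strictly positive coordinate,
`sup {λ ≥ 0 : λ·d ∈ P(f)} = inf {F(x) : x ≥ 0, ⟨d,x⟩ = 1}`. -/
theorem line_search_duality (n : ℕ) (hn : 1 ≤ n) (f : Finset (Fin n) → ℝ)
    (hsub : Submodular f) (hf0 : f ∅ = 0) (hfnn : ∀ S, 0 ≤ f S)
    (d : Fin n → ℝ) (hd : ∃ i, 0 < d i) :
    sSup {l : ℝ | 0 ≤ l ∧ (fun i => l * d i) ∈ extPolymatroid f} =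
      sInf {r : ℝ | ∃ x : Fin n → ℝ, (∀ i, 0 ≤ x i) ∧ (∑ i, d i * x i) = 1 ∧
        r = lovasz f x} := by
  classical
  obtain ⟨i0, hi0⟩ := hd
  set A : Set ℝ := {l : ℝ | 0 ≤ l ∧ (fun i => l * d i) ∈ extPolymatroid f} with hA
  set R : Set ℝ := {r : ℝ | ∃ x : Fin n → ℝ, (∀ i, 0 ≤ x i) ∧ (∑ i, d i * x i) = 1 ∧
        r = lovasz f x} with hR
  -- the finite family of sets with positive d-mass
  set T : Finset (Finset (Fin n)) :=
    Finset.univ.filter (fun S : Finset (Fin n) => 0 < ∑ i ∈ S, d i) with hT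
  have hTne : T.Nonempty := ⟨{i0}, by simp [hT, hi0]⟩
  obtain ⟨Sm, hSmT, hmin⟩ := T.exists_min_image (fun S => f S / ∑ i ∈ S, d i) hTne
  have hdSm : 0 < ∑ i ∈ Sm, d i := by
    have := Finset.mem_filter.1 hSmT
    exact this.2
  set μ : ℝ := f Sm / ∑ i ∈ Sm, d i with hμ
  have hμ0 : 0 ≤ μ := div_nonneg (hfnn Sm) hdSm.le
  -- μ belongs to A
  have hμA : μ ∈ A := by
    refine ⟨hμ0, fun S => ?_⟩
    have hS : ∑ i ∈ S, μ * d i = μ * ∑ i ∈ S, d i := by rw [Finset.mul_sum]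
    rw [hS]
    by_cases hdS : 0 < ∑ i ∈ S, d i
    · have hST : S ∈ T := Finset.mem_filter.2 ⟨Finset.mem_univ S, hdS⟩
      have := hmin S hST
      calc μ * ∑ i ∈ S, d i ≤ (f S / ∑ i ∈ S, d i) * ∑ i ∈ S, d i :=
            mul_le_mul_of_nonneg_right this hdS.le
        _ = f S := div_mul_cancel₀ _ (ne_of_gt hdS)
    · push_neg at hdS
      exact le_trans (mul_nonpos_of_nonneg_of_nonpos hμ0 hdS) (hfnn S)
  -- every element of A is ≤ μ
  have hAle : ∀ l ∈ A, l ≤ μ := by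
    rintro l ⟨hl0, hlP⟩
    have h1 := hlP Sm
    have h2 : ∑ i ∈ Sm, l * d i = l * ∑ i ∈ Sm, d i := by rw [Finset.mul_sum]
    rw [h2] at h1
    rw [hμ, le_div_iff₀ hdSm]
    exact h1
  have hsupA : sSup A = μ :=
    le_antisymm (csSup_le ⟨μ, hμA⟩ hAle) (le_csSup ⟨μ, hAle⟩ hμA)
  -- the candidate primal point
  set x0 : Fin n → ℝ := fun i => if i ∈ Sm then (∑ i ∈ Sm, d i)⁻¹ else 0 with hx0
  have hx0nn : ∀ i, 0 ≤ x0 i := by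
    intro i
    simp only [hx0]
    split
    · exact inv_nonneg.2 hdSm.le
    · exact le_refl 0
  have hx0d : ∑ i, d i * x0 i = 1 := by
    have : ∑ i, d i * x0 i = ∑ i ∈ Sm, d i * (∑ j ∈ Sm, d j)⁻¹ := by
      rw [← Finset.sum_filter_add_sum_filter_not Finset.univ (fun i => i ∈ Sm)]
      have h1 : ∀ i ∈ Finset.univ.filter (fun i => i ∈ Sm), d i * x0 i = d i * (∑ j ∈ Sm, d j)⁻¹ := by
        intro i hi
        have := (Finset.mem_filter.1 hi).2
        simp [hx0, this]
      have h2 : ∀ i ∈ Finset.univ.filter (fun i => ¬ i ∈ Sm), d i * x0 i = 0 := by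
        intro i hi
        have := (Finset.mem_filter.1 hi).2
        simp [hx0, this]
      rw [Finset.sum_congr rfl h1, Finset.sum_congr rfl h2, Finset.sum_const_zero, add_zero]
      congr 1
      ext i
      simp
    rw [this, ← Finset.sum_mul]
    exact mul_inv_cancel₀ (ne_of_gt hdSm)
  -- basePoly is nonempty
  have hBne : (basePoly f).Nonempty := ⟨gb f 1, gb_mem_basePoly f hsub hf0 1⟩
  -- lovasz of x0 is at most μ
  have hlov0 : lovasz f x0 ≤ μ := by
    apply csSup_le (hBne.image _)
    rintro r ⟨v, hv, rfl⟩
    show ∑ i, v i * x0 i ≤ μ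
    have h1 : ∑ i, v i * x0 i = (∑ i ∈ Sm, v i) * (∑ j ∈ Sm, d j)⁻¹ := by
      rw [Finset.sum_mul]
      rw [← Finset.sum_filter_add_sum_filter_not Finset.univ (fun i => i ∈ Sm)]
      have h1 : ∀ i ∈ Finset.univ.filter (fun i => i ∈ Sm), v i * x0 i = v i * (∑ j ∈ Sm, d j)⁻¹ := by
        intro i hi
        have := (Finset.mem_filter.1 hi).2
        simp [hx0, this]
      have h2 : ∀ i ∈ Finset.univ.filter (fun i => ¬ i ∈ Sm), v i * x0 i = 0 := by
        intro i hi
        have := (Finset.mem_filter.1 hi).2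
        simp [hx0, this]
      rw [Finset.sum_congr rfl h1, Finset.sum_congr rfl h2, Finset.sum_const_zero, add_zero]
      congr 1
      ext i
      simp
    rw [h1, hμ, div_eq_mul_inv]
    exact mul_le_mul_of_nonneg_right (hv.1 Sm) (inv_nonneg.2 hdSm.le)
  have hr0R : lovasz f x0 ∈ R := ⟨x0, hx0nn, hx0d, rfl⟩
  -- μ is a lower bound for R
  have hμlb : ∀ r ∈ R, μ ≤ r := by
    rintro r ⟨x, hxnn, hxd, rfl⟩
    obtain ⟨b, hb, hbx⟩ := greedy_dominates f hsub hf0 d x hxnn μ hμA.2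
    rw [hxd, mul_one] at hbx
    have hbdd : BddAbove ((fun v : Fin n → ℝ => ∑ i, v i * x i) '' basePoly f) := by
      refine ⟨∑ i, f {i} * x i, ?_⟩
      rintro r ⟨v, hv, rfl⟩
      apply Finset.sum_le_sum
      intro i _
      have h1 : v i ≤ f {i} := by
        have := hv.1 {i}
        simpa using this
      exact mul_le_mul_of_nonneg_right h1 (hxnn i)
    calc μ ≤ ∑ i, b i * x i := hbx
      _ ≤ lovasz f x := le_csSup hbdd ⟨b, hb, rfl⟩
  have hinfR : sInf R = μ := by
    apply le_antisymm
    · exact csInf_le_of_le ⟨μ, hμlb⟩ hr0R hlov0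
    · exact le_csInf ⟨_, hr0R⟩ hμlb
  rw [hsupA, hinfR]
end

section
/- Let f : 2^E → ℤ be submodular with f(∅) = 0 and 0 ≤ f(S) ≤ M for all S ⊆ E, and let d ∈ ℤ^n be nonzero. Suppose R > M, and define the penalized objective Φ(x) = F(x) + R·|1 − ⟨d, x⟩| for x ∈ ℝ^n. Then every global minimizer x* of Φ (i.e., any x* with Φ(x*) ≤ Φ(x) for all x ∈ ℝ^n) satisfies ⟨d, x*⟩ = 1. -/
open Finset

/-- Every global minimizer of the penalized objective `Φ(x) = F(x) + R·|1 - ⟨d,x⟩|`,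
with integral `f`, `0 ≤ f ≤ M`, nonzero integral `d` and `R > M`,
lies on the hyperplane `⟨d,x⟩ = 1`. -/
theorem penalty_active (n : ℕ) (hn : 1 ≤ n) (f : Finset (Fin n) → ℤ) (M : ℝ)
    (hsub : Submodular (fun S => (f S : ℝ))) (hf0 : f ∅ = 0)
    (hfnn : ∀ S, 0 ≤ (f S : ℝ)) (hfM : ∀ S, (f S : ℝ) ≤ M)
    (d : Fin n → ℤ) (hd : d ≠ 0) (R : ℝ) (hR : M < R)
    (x : Fin n → ℝ)
    (hmin : ∀ z : Fin n → ℝ,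
      lovasz (fun S => (f S : ℝ)) x + R * |1 - ∑ i, (d i : ℝ) * x i| ≤
        lovasz (fun S => (f S : ℝ)) z + R * |1 - ∑ i, (d i : ℝ) * z i|) :
    (∑ i, (d i : ℝ) * x i) = 1 := by
  by_contra hne
  set f' : Finset (Fin n) → ℝ := fun S => (f S : ℝ) with hf'
  set t : ℝ := 1 - ∑ i, (d i : ℝ) * x i with ht
  have ht0 : t ≠ 0 := by
    intro h
    apply hne
    have : (1:ℝ) - ∑ i, (d i : ℝ) * x i = 0 := h
    linarith
  have htpos : 0 < |t| := abs_pos.mpr ht0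
  obtain ⟨i, hdi⟩ : ∃ i, d i ≠ 0 := by
    by_contra h
    push_neg at h
    exact hd (funext h)
  have hdi1 : (1:ℝ) ≤ |(d i : ℝ)| := by
    have h1 : (1:ℤ) ≤ |d i| := Int.one_le_abs hdi
    calc (1:ℝ) ≤ ((|d i| : ℤ) : ℝ) := by exact_mod_cast h1
      _ = |(d i : ℝ)| := by push_cast; ring
  have hdipos : (0:ℝ) < |(d i : ℝ)| := lt_of_lt_of_le one_pos hdi1
  set c : ℝ := t / (d i : ℝ) with hc
  set z : Fin n → ℝ := fun j => x j + if j = i then c else 0 with hz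
  have hM0 : (0:ℝ) ≤ M := le_trans (hfnn ∅) (hfM ∅)
  have hdz : ∑ j, (d j : ℝ) * z j = 1 := by
    have hdic : (d i : ℝ) * c = t := by
      rw [hc]
      field_simp
    have : ∑ j, (d j : ℝ) * z j
        = (∑ j, (d j : ℝ) * x j) + ∑ j, (if j = i then (d j : ℝ) * c else 0) := by
      rw [← Finset.sum_add_distrib]
      apply Finset.sum_congr rfl
      intro j _
      by_cases hji : j = i <;> simp [hz, hji, mul_add]
    rw [this, Finset.sum_ite_eq' univ i (fun j => (d j : ℝ) * c)]
    simp [hdic]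
    linarith [ht]
  have hzx : ∀ v : Fin n → ℝ, ∑ j, v j * z j = (∑ j, v j * x j) + v i * c := by
    intro v
    have : ∑ j, v j * z j
        = (∑ j, v j * x j) + ∑ j, (if j = i then v j * c else 0) := by
      rw [← Finset.sum_add_distrib]
      apply Finset.sum_congr rfl
      intro j _
      by_cases hji : j = i <;> simp [hz, hji, mul_add]
    rw [this, Finset.sum_ite_eq' univ i (fun j => v j * c)]
    simp
  have hcabs : |c| ≤ |t| := by
    rw [hc, abs_div]
    rw [div_le_iff₀ hdipos]
    nlinarith [abs_nonneg t]
  -- bound on base polytope coordinates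
  have hub : ∀ v ∈ basePoly f', ∀ j, |v j| ≤ M := by
    rintro v ⟨hv1, hv2⟩ j
    have h1 : v j ≤ M := by
      have h := hv1 {j}
      simp at h
      exact h.trans (hfM {j})
    have h2 : -M ≤ v j := by
      have hs : ∑ k ∈ univ \ {j}, v k ≤ f' (univ \ {j}) := hv1 _
      have hsplit : ∑ k ∈ univ \ {j}, v k = (∑ k, v k) - v j := by
        rw [Finset.sum_sdiff_eq_sub (Finset.subset_univ {j})]
        simp
      have hfE : (0:ℝ) ≤ f' univ := hfnn univ
      have hfS : f' (univ \ {j}) ≤ M := hfM _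
      have : v j = f' univ - ∑ k ∈ univ \ {j}, v k := by
        rw [← hv2]; linarith
      linarith
    rw [abs_le]; exact ⟨h2, h1⟩
  have hbdd : ∀ y : Fin n → ℝ,
      BddAbove ((fun v : Fin n → ℝ => ∑ j, v j * y j) '' basePoly f') := by
    intro y
    refine ⟨M * ∑ j, |y j|, ?_⟩
    rintro s ⟨v, hv, rfl⟩
    rw [Finset.mul_sum]
    apply Finset.sum_le_sum
    intro j _
    calc v j * y j ≤ |v j * y j| := le_abs_self _
      _ = |v j| * |y j| := abs_mul _ _
      _ ≤ M * |y j| := mul_le_mul_of_nonneg_right (hub v hv j) (abs_nonneg _)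
  rcases Set.eq_empty_or_nonempty (basePoly f') with hB | hB
  · have hFx : lovasz f' x = 0 := by
      simp [lovasz, hB, Real.sSup_empty]
    have hFz : lovasz f' z = 0 := by
      simp [lovasz, hB, Real.sSup_empty]
    have h := hmin z
    rw [hdz] at h
    rw [hFx, hFz] at h
    simp at h
    nlinarith
  · have hFzle : lovasz f' z ≤ lovasz f' x + M * |t| := by
      apply csSup_le (hB.image _)
      rintro s ⟨v, hv, rfl⟩
      have hvx : ∑ j, v j * x j ≤ lovasz f' x :=
        le_csSup (hbdd x) ⟨v, hv, rfl⟩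
      have hvic : v i * c ≤ M * |t| := by
        calc v i * c ≤ |v i * c| := le_abs_self _
          _ = |v i| * |c| := abs_mul _ _
          _ ≤ M * |t| := mul_le_mul (hub v hv i) hcabs (abs_nonneg _) hM0
      dsimp only
      rw [hzx v]
      linarith
    have h := hmin z
    rw [hdz] at h
    simp at h
    nlinarith
end

section
/- Let f : 2^E → ℤ be submodular with f(∅) = 0 and 0 ≤ f(S) ≤ M for all S ⊆ E, and let d ∈ ℤ^n be nonzero. Suppose R > M, and define Φ(x) = F(x) + R·|1 − ⟨d, x⟩|. Then the unconstrained penalized problem and the constrained problem have equal optimal values: inf_{x ∈ ℝ^n} Φ(x) = inf{F(x) : x ∈ ℝ^n, ⟨d, x⟩ = 1}. -/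
open Finset

lemma coord_bound {m : ℕ} (f : Finset (Fin m) → ℝ) (M : ℝ)
    (hfnn : ∀ S, 0 ≤ f S) (hfM : ∀ S, f S ≤ M)
    {v : Fin m → ℝ} (hv : v ∈ basePoly f) (j : Fin m) : |v j| ≤ M := by
  obtain ⟨h1, h2⟩ := hv
  have hub : v j ≤ M := by
    have := (h1 {j}).trans (hfM {j})
    simpa using this
  have hsplit : ∑ i ∈ univ.erase j, v i + v j = f univ := by
    rw [Finset.sum_erase_add univ v (mem_univ j)]
    exact h2
  have h3 : ∑ i ∈ univ.erase j, v i ≤ M := (h1 _).trans (hfM _)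
  have h4 : 0 ≤ f univ := hfnn _
  rw [abs_le]; constructor <;> linarith

lemma bddAbove_lovasz {m : ℕ} (f : Finset (Fin m) → ℝ) (M : ℝ)
    (hfnn : ∀ S, 0 ≤ f S) (hfM : ∀ S, f S ≤ M) (x : Fin m → ℝ) :
    BddAbove ((fun v : Fin m → ℝ => ∑ i, v i * x i) '' basePoly f) := by
  refine ⟨∑ i, M * |x i|, ?_⟩
  rintro r ⟨v, hv, rfl⟩
  refine Finset.sum_le_sum fun i _ => ?_
  calc v i * x i ≤ |v i * x i| := le_abs_self _
    _ = |v i| * |x i| := abs_mul _ _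
    _ ≤ M * |x i| :=
        mul_le_mul_of_nonneg_right (coord_bound f M hfnn hfM hv i) (abs_nonneg _)

lemma lovasz_shift {m : ℕ} (f : Finset (Fin m) → ℝ) (M : ℝ)
    (hfnn : ∀ S, 0 ≤ f S) (hfM : ∀ S, f S ≤ M)
    (x : Fin m → ℝ) (i : Fin m) (t : ℝ) :
    lovasz f (fun j => x j + if j = i then t else 0) ≤ lovasz f x + M * |t| := by
  have hM0 : 0 ≤ M := (hfnn ∅).trans (hfM ∅)
  by_cases hB : (basePoly f).Nonempty
  · apply csSup_le (hB.image _)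
    rintro r ⟨v, hv, rfl⟩
    dsimp only
    have hsum : ∑ j, v j * (x j + if j = i then t else 0)
        = (∑ j, v j * x j) + v i * t := by
      have key : ∀ j ∈ univ, v j * (x j + if j = i then t else 0)
          = v j * x j + (if j = i then v j * t else 0) := by
        intro j _; split <;> ring
      rw [Finset.sum_congr rfl key, Finset.sum_add_distrib,
        Finset.sum_ite_eq' univ i (fun j => v j * t)]
      simp
    rw [hsum]
    have h1 : ∑ j, v j * x j ≤ lovasz f x :=
      le_csSup (bddAbove_lovasz f M hfnn hfM x) ⟨v, hv, rfl⟩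
    have h2 : v i * t ≤ M * |t| := by
      calc v i * t ≤ |v i * t| := le_abs_self _
        _ = |v i| * |t| := abs_mul _ _
        _ ≤ M * |t| :=
            mul_le_mul_of_nonneg_right (coord_bound f M hfnn hfM hv i) (abs_nonneg _)
    linarith
  · have hBe : basePoly f = (∅ : Set (Fin m → ℝ)) :=
      Set.not_nonempty_iff_eq_empty.mp hB
    simp only [lovasz, hBe, Set.image_empty, Real.sSup_empty]
    positivity

/-- The unconstrained penalized problem `inf_x F(x) + R·|1 - ⟨d,x⟩|` has the same optimal
value as the constrained problem `inf {F(x) : ⟨d,x⟩ = 1}`, provided `R > M`. -/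
theorem penalized_eq_constrained (n : ℕ) (hn : 1 ≤ n) (f : Finset (Fin n) → ℤ) (M : ℝ)
    (hsub : Submodular (fun S => (f S : ℝ))) (hf0 : f ∅ = 0)
    (hfnn : ∀ S, 0 ≤ (f S : ℝ)) (hfM : ∀ S, (f S : ℝ) ≤ M)
    (d : Fin n → ℤ) (hd : d ≠ 0) (R : ℝ) (hR : M < R) :
    sInf (Set.range (fun x : Fin n → ℝ =>
        lovasz (fun S => (f S : ℝ)) x + R * |1 - ∑ i, (d i : ℝ) * x i|)) =
      sInf {r : ℝ | ∃ x : Fin n → ℝ, (∑ i, (d i : ℝ) * x i) = 1 ∧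
        r = lovasz (fun S => (f S : ℝ)) x} := by
  set F : (Fin n → ℝ) → ℝ := lovasz (fun S => (f S : ℝ)) with hF
  set S : Set ℝ := Set.range (fun x : Fin n → ℝ => F x + R * |1 - ∑ i, (d i : ℝ) * x i|)
    with hS
  set T : Set ℝ := {r : ℝ | ∃ x : Fin n → ℝ, (∑ i, (d i : ℝ) * x i) = 1 ∧ r = F x} with hT
  have hM0 : 0 ≤ M := (hfnn ∅).trans (hfM ∅)
  -- pick a coordinate where d is nonzero
  obtain ⟨i, hi⟩ : ∃ i, d i ≠ 0 := by
    by_contra h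
    push_neg at h
    exact hd (funext h)
  have hdi : (d i : ℝ) ≠ 0 := Int.cast_ne_zero.mpr hi
  have hdi1 : (1 : ℝ) ≤ |(d i : ℝ)| := by
    rw [← Int.cast_abs]
    exact_mod_cast Int.one_le_abs hi
  -- key: for every x there is a feasible y with F y ≤ Φ x
  have key : ∀ x : Fin n → ℝ, ∃ y : Fin n → ℝ, (∑ j, (d j : ℝ) * y j) = 1 ∧
      F y ≤ F x + R * |1 - ∑ j, (d j : ℝ) * x j| := by
    intro x
    set a := ∑ j, (d j : ℝ) * x j with ha
    set t := (1 - a) / (d i : ℝ) with ht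
    refine ⟨fun j => x j + if j = i then t else 0, ?_, ?_⟩
    · have key2 : ∀ j ∈ univ, (d j : ℝ) * (x j + if j = i then t else 0)
          = (d j : ℝ) * x j + (if j = i then (d j : ℝ) * t else 0) := by
        intro j _; split <;> ring
      rw [Finset.sum_congr rfl key2, Finset.sum_add_distrib,
        Finset.sum_ite_eq' univ i (fun j => (d j : ℝ) * t)]
      simp only [mem_univ, if_true, ht]
      field_simp
      linarith [ha]
    · have h1 : F (fun j => x j + if j = i then t else 0) ≤ F x + M * |t| :=
        lovasz_shift _ M hfnn hfM x i t
      have h2 : |t| ≤ |1 - a| := by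
        rw [ht, abs_div]
        calc |1 - a| / |(d i : ℝ)| ≤ |1 - a| / 1 :=
              div_le_div_of_nonneg_left (abs_nonneg _) one_pos hdi1
          _ = |1 - a| := div_one _
      have h3 : M * |t| ≤ R * |1 - a| := by
        calc M * |t| ≤ M * |1 - a| := mul_le_mul_of_nonneg_left h2 hM0
          _ ≤ R * |1 - a| := mul_le_mul_of_nonneg_right hR.le (abs_nonneg _)
      linarith
  have hTS : T ⊆ S := by
    rintro r ⟨x, hx1, rfl⟩
    exact ⟨x, by dsimp only; rw [hx1]; simp⟩
  have hTne : T.Nonempty := by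
    obtain ⟨y, hy, -⟩ := key 0
    exact ⟨F y, y, hy, rfl⟩
  have hSne : S.Nonempty := hTne.mono hTS
  by_cases hbd : BddBelow T
  · have hbdS : BddBelow S := by
      obtain ⟨c, hc⟩ := hbd
      refine ⟨c, ?_⟩
      rintro s ⟨x, rfl⟩
      obtain ⟨y, hy1, hy2⟩ := key x
      exact le_trans (hc ⟨y, hy1, rfl⟩) hy2
    apply le_antisymm
    · exact csInf_le_csInf hbdS hTne hTS
    · apply le_csInf hSne
      rintro s ⟨x, rfl⟩
      obtain ⟨y, hy1, hy2⟩ := key x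
      exact le_trans (csInf_le hbd ⟨y, hy1, rfl⟩) hy2
  · have hbdS : ¬ BddBelow S := fun h => hbd (h.mono hTS)
    rw [Real.sInf_of_not_bddBelow hbd, Real.sInf_of_not_bddBelow hbdS]
end

section
/- Let f : 2^E → ℝ be submodular with f(∅) = 0, and let C ≥ 0. Then the lifted function f̂(·;C) : 2^{Ê} → ℝ is submodular on the lifted ground set Ê = E ∪ {n+1}; that is, f̂(S ∩ T; C) + f̂(S ∪ T; C) ≤ f̂(S; C) + f̂(T; C) for all S, T ⊆ Ê. -/
open Finset

/-- The lifted function `f̂(·;C)` on the ground set `Ê = E ∪ {n+1}`: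
`f̂(S;C) = f(S)` if `n+1 ∉ S`; `f̂(S;C) = f(S \\ {n+1}) + C` if `n+1 ∈ S` and `S ≠ Ê`;
and `f̂(Ê;C) = f(E)`. -/
noncomputable def lifted (n : ℕ) (f : Finset (Fin n) → ℝ) (C : ℝ)
    (S : Finset (Fin (n + 1))) : ℝ :=
  if Fin.last n ∈ S then
    (if S = univ then f univ
     else f (univ.filter (fun i : Fin n => i.castSucc ∈ S)) + C)
  else f (univ.filter (fun i : Fin n => i.castSucc ∈ S))


lemma proj_inter (n : ℕ) (S T : Finset (Fin (n+1))) :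
    univ.filter (fun i : Fin n => i.castSucc ∈ S ∩ T)
      = univ.filter (fun i : Fin n => i.castSucc ∈ S)
        ∩ univ.filter (fun i : Fin n => i.castSucc ∈ T) := by
  ext i; simp

lemma proj_union (n : ℕ) (S T : Finset (Fin (n+1))) :
    univ.filter (fun i : Fin n => i.castSucc ∈ S ∪ T)
      = univ.filter (fun i : Fin n => i.castSucc ∈ S)
        ∪ univ.filter (fun i : Fin n => i.castSucc ∈ T) := by
  ext i; simp

lemma proj_univ (n : ℕ) :
    univ.filter (fun i : Fin n => i.castSucc ∈ (univ : Finset (Fin (n+1)))) = univ := by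
  simp

lemma lifted_eq (n : ℕ) (f : Finset (Fin n) → ℝ) (C : ℝ) (S : Finset (Fin (n+1))) :
    lifted n f C S =
      f (univ.filter (fun i : Fin n => i.castSucc ∈ S))
        + (if Fin.last n ∈ S then C else 0) - (if S = univ then C else 0) := by
  unfold lifted
  by_cases hU : S = univ
  · subst hU; simp [proj_univ]
  · by_cases he : Fin.last n ∈ S <;> simp [he, hU]

/-- The lifted function `f̂(·;C)` is submodular on the lifted ground set. -/
theorem lifted_submodular (n : ℕ) (hn : 1 ≤ n) (f : Finset (Fin n) → ℝ)
    (hsub : Submodular f) (hf0 : f ∅ = 0) (C : ℝ) (hC : 0 ≤ C) :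
    ∀ S T : Finset (Fin (n + 1)),
      lifted n f C (S ∩ T) + lifted n f C (S ∪ T) ≤ lifted n f C S + lifted n f C T := by
  intro S T
  by_cases hS : S = univ
  · subst hS; rw [univ_inter, show (univ ∪ T : Finset (Fin (n+1))) = univ from univ_subset_iff.mp subset_union_left]; linarith
  by_cases hT : T = univ
  · subst hT; rw [inter_univ, show (S ∪ univ : Finset (Fin (n+1))) = univ from univ_subset_iff.mp subset_union_right]
  have hIU : S ∩ T ≠ univ := fun h => hS (eq_univ_of_forall fun x => (mem_inter.mp (h ▸ mem_univ x)).1)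
  have key := hsub (univ.filter (fun i : Fin n => i.castSucc ∈ S))
      (univ.filter (fun i : Fin n => i.castSucc ∈ T))
  rw [lifted_eq, lifted_eq, lifted_eq, lifted_eq, proj_inter, proj_union]
  simp only [Finset.mem_inter, Finset.mem_union, if_neg hS, if_neg hT, if_neg hIU]
  split_ifs <;> first | linarith | tauto
end

section
/- Let f : 2^E → ℤ be submodular with f(∅) = 0 and 0 ≤ f(S) ≤ M for all S ⊆ E, and let d ∈ ℤ^n have at least one strictly positive coordinate. Set d̂ = (d_1,…,d_n, 0) ∈ ℝ^{n+1} and let e_{n+1} be the (n+1)-st standard basis vector. If C ≥ M·(‖d‖₁ + 1), then sup{λ₁ ∈ ℝ : there exists λ₂ ∈ ℝ with λ₁·d̂ + λ₂·e_{n+1} ∈ B(f̂(·;C))} = sup{λ ∈ ℝ : λ ≥ 0 and λ·d ∈ P(f)} (lifting equivalence of the line search problems). -/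
open Finset


lemma sum_key {n : ℕ} (dd : Fin n → ℝ) (l₁ l₂ : ℝ) (S : Finset (Fin (n+1))) :
    ∑ j ∈ S, (l₁ * (Fin.snoc dd 0 : Fin (n+1) → ℝ) j +
        l₂ * (if j = Fin.last n then (1:ℝ) else 0))
      = l₁ * ∑ i ∈ univ.filter (fun i : Fin n => i.castSucc ∈ S), dd i
        + (if Fin.last n ∈ S then l₂ else 0) := by
  classical
  have h1 : ∑ j ∈ S, (l₁ * (Fin.snoc dd 0 : Fin (n+1) → ℝ) j +
        l₂ * (if j = Fin.last n then (1:ℝ) else 0))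
      = ∑ j : Fin (n+1), (if j ∈ S then (l₁ * (Fin.snoc dd 0 : Fin (n+1) → ℝ) j +
        l₂ * (if j = Fin.last n then (1:ℝ) else 0)) else 0) := by
    rw [Finset.sum_ite_mem, Finset.univ_inter]
  rw [h1, Fin.sum_univ_castSucc]
  have hne : ∀ i : Fin n, i.castSucc ≠ Fin.last n := fun i => (Fin.castSucc_lt_last i).ne
  simp only [Fin.snoc_castSucc, Fin.snoc_last, hne, if_false, mul_zero, mul_one, add_zero,
    zero_add, if_pos rfl]
  rw [Finset.sum_filter, Finset.mul_sum]
  congr 1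
  · apply Finset.sum_congr rfl
    intro i _
    by_cases h : i.castSucc ∈ S <;> simp [h]
  · by_cases h : Fin.last n ∈ S <;> simp [h]



/-- **Lifting equivalence.** For `C ≥ M·(‖d‖₁ + 1)`, the line search over the lifted base
polytope `B(f̂(·;C))` in direction `d̂ = (d, 0)` (with free last coordinate) has the same
value as the line search over `P(f)` in direction `d`. -/
theorem lifting_equivalence (n : ℕ) (hn : 1 ≤ n) (f : Finset (Fin n) → ℤ) (M : ℝ)
    (hsub : Submodular (fun S => (f S : ℝ))) (hf0 : f ∅ = 0)
    (hfnn : ∀ S, 0 ≤ (f S : ℝ)) (hfM : ∀ S, (f S : ℝ) ≤ M)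
    (d : Fin n → ℤ) (hd : ∃ i, 0 < d i)
    (C : ℝ) (hC : M * ((∑ i, |(d i : ℝ)|) + 1) ≤ C) :
    sSup {l₁ : ℝ | ∃ l₂ : ℝ,
        (fun j : Fin (n + 1) =>
            l₁ * (Fin.snoc (fun i : Fin n => (d i : ℝ)) 0 : Fin (n + 1) → ℝ) j +
            l₂ * (if j = Fin.last n then (1 : ℝ) else 0)) ∈
          basePoly (lifted n (fun S => (f S : ℝ)) C)} =
      sSup {l : ℝ | 0 ≤ l ∧ (fun i => l * (d i : ℝ)) ∈
        extPolymatroid (fun S => (f S : ℝ))} := by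
  classical
  set dd : Fin n → ℝ := fun i => (d i : ℝ) with hdd
  set D : ℝ := ∑ i, |dd i| with hDdef
  set Rset : Set ℝ := {l : ℝ | 0 ≤ l ∧ (fun i => l * (d i : ℝ)) ∈
      extPolymatroid (fun S => (f S : ℝ))} with hRdef
  set Lset : Set ℝ := {l₁ : ℝ | ∃ l₂ : ℝ,
        (fun j : Fin (n + 1) =>
            l₁ * (Fin.snoc (fun i : Fin n => (d i : ℝ)) 0 : Fin (n + 1) → ℝ) j +
            l₂ * (if j = Fin.last n then (1 : ℝ) else 0)) ∈
          basePoly (lifted n (fun S => (f S : ℝ)) C)} with hLdef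
  have hM0 : 0 ≤ M := le_trans (hfnn ∅) (hfM ∅)
  have hD0 : 0 ≤ D := Finset.sum_nonneg (fun i _ => abs_nonneg _)
  obtain ⟨i₀, hi₀⟩ := hd
  have hdi₀ : (1:ℝ) ≤ dd i₀ := by
    simp only [hdd]
    exact_mod_cast hi₀
  -- 0 ∈ Rset
  have hR0 : (0:ℝ) ∈ Rset := by
    refine ⟨le_refl 0, fun S => ?_⟩
    simpa using hfnn S
  -- Rset bounded by M
  have hRbdd : ∀ l ∈ Rset, l ≤ M := by
    rintro l ⟨hl0, hlP⟩
    have h1 : l * dd i₀ ≤ (f {i₀} : ℝ) := by simpa using hlP {i₀}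
    calc l = l * 1 := by ring
      _ ≤ l * dd i₀ := mul_le_mul_of_nonneg_left hdi₀ hl0
      _ ≤ (f {i₀} : ℝ) := h1
      _ ≤ M := hfM _
  have hRbddAbove : BddAbove Rset := ⟨M, fun l hl => hRbdd l hl⟩
  have hsupR0 : 0 ≤ sSup Rset := le_csSup hRbddAbove hR0
  -- each l ∈ Rset, with suitable l₂, lies in Lset
  have hRsubL : Rset ⊆ Lset := by
    rintro l ⟨hl0, hlP⟩
    have hlM : l ≤ M := hRbdd l ⟨hl0, hlP⟩
    refine ⟨(f univ : ℝ) - l * ∑ i, dd i, ?_, ?_⟩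
    · intro S
      rw [sum_key]
      set S' : Finset (Fin n) := univ.filter (fun i : Fin n => i.castSucc ∈ S) with hS'
      have hPS' : l * ∑ i ∈ S', dd i ≤ (f S' : ℝ) := by
        have := hlP S'
        rwa [← Finset.mul_sum] at this
      by_cases hlast : Fin.last n ∈ S
      · by_cases huniv : S = univ
        · subst huniv
          have hS'univ : S' = univ := by
            ext i; simp [hS']
          have hlu : lifted n (fun S => (f S : ℝ)) C univ = (f univ : ℝ) := by
            simp [lifted]
          rw [hlu, hS'univ, if_pos hlast]
          simp only [hdd]
          linarith
        · simp only [lifted, if_pos hlast, if_neg huniv, if_pos hlast]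
          -- goal: l * ∑ S' dd + (f univ - l * ∑ univ dd) ≤ f S' + C
          have hbound : ∑ i ∈ S', dd i - ∑ i, dd i ≤ D := by
            have hsd : ∑ i ∈ univ \ S', dd i = ∑ i, dd i - ∑ i ∈ S', dd i :=
              Finset.sum_sdiff_eq_sub (Finset.subset_univ _)
            have h2 : ∑ i ∈ univ \ S', |dd i| ≤ D :=
              Finset.sum_le_sum_of_subset_of_nonneg (Finset.sdiff_subset)
                (fun i _ _ => abs_nonneg _)
            have h3 : -∑ i ∈ univ \ S', |dd i| ≤ ∑ i ∈ univ \ S', dd i := by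
              rw [← Finset.sum_neg_distrib]
              exact Finset.sum_le_sum (fun i _ => neg_abs_le _)
            linarith
          have h4 : l * (∑ i ∈ S', dd i - ∑ i, dd i) ≤ M * D :=
            le_trans (mul_le_mul_of_nonneg_left hbound hl0)
              (mul_le_mul_of_nonneg_right hlM hD0)
          have h5 : (0:ℝ) ≤ (f S' : ℝ) := hfnn S'
          have h6 : (f univ : ℝ) ≤ M := hfM _
          have h7 : M * D + M ≤ C := by rw [hDdef] at hC ⊢; nlinarith [hC]
          nlinarith [h4]
      · simp only [lifted, if_neg hlast]
        simpa using hPS'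
    · rw [sum_key]
      have hS'univ : (univ.filter (fun i : Fin n => i.castSucc ∈ (univ : Finset (Fin (n+1)))))
          = (univ : Finset (Fin n)) := by ext i; simp
      have hlu : lifted n (fun S => (f S : ℝ)) C univ = (f univ : ℝ) := by
        simp [lifted]
      rw [hlu, hS'univ]
      simp
      simp only [hdd]
      ring
  -- every element of Lset is ≤ sSup Rset
  have hLle : ∀ l₁ ∈ Lset, l₁ ≤ sSup Rset := by
    rintro l₁ ⟨l₂, hmem⟩
    rcases le_or_gt l₁ 0 with h | h
    · exact h.trans hsupR0
    · apply le_csSup hRbddAbove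
      refine ⟨h.le, fun S => ?_⟩
      have hkey := hmem.1 (S.image Fin.castSucc)
      rw [sum_key] at hkey
      have hlast : Fin.last n ∉ S.image Fin.castSucc := by
        intro hmem'
        obtain ⟨i, _, hi⟩ := Finset.mem_image.mp hmem'
        exact (Fin.castSucc_lt_last i).ne hi
      have hfilter : univ.filter (fun i : Fin n => i.castSucc ∈ S.image Fin.castSucc) = S := by
        ext i
        simp [Fin.castSucc_inj]
      rw [hfilter, if_neg hlast, add_zero] at hkey
      simp only [lifted, if_neg hlast, hfilter] at hkey
      calc ∑ i ∈ S, l₁ * (d i : ℝ) = l₁ * ∑ i ∈ S, dd i := by rw [Finset.mul_sum]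
        _ ≤ (f S : ℝ) := hkey
  have hLne : Lset.Nonempty := ⟨0, hRsubL hR0⟩
  have hLbdd : BddAbove Lset := ⟨sSup Rset, fun x hx => hLle x hx⟩
  apply le_antisymm
  · exact csSup_le hLne hLle
  · exact csSup_le_csSup hLbdd ⟨0, hR0⟩ hRsubL
end

section
/- Let f : 2^E → ℝ be submodular with f(∅) = 0 and 0 ≤ f(S) ≤ M for all S ⊆ E. If z ∈ P(f) and C ≥ ‖z‖₁ + M, then the lifted vector (z_1,…,z_n, f(E) − z(E)) ∈ ℝ^{n+1} belongs to the base polytope B(f̂(·;C)) of the lifted function. -/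
open Finset

lemma sum_snoc_eq (n : ℕ) (z : Fin n → ℝ) (a : ℝ) (S : Finset (Fin (n + 1))) :
    ∑ i ∈ S, Fin.snoc z a i
      = (∑ i ∈ univ.filter (fun i : Fin n => i.castSucc ∈ S), z i)
        + (if Fin.last n ∈ S then a else 0) := by
  classical
  have himg : (univ.filter (fun i : Fin n => i.castSucc ∈ S)).image Fin.castSucc
      = S.erase (Fin.last n) := by
    ext j
    simp only [Finset.mem_image, Finset.mem_filter, Finset.mem_erase, Finset.mem_univ, true_and]
    constructor
    · rintro ⟨i, hi, rfl⟩
      exact ⟨(Fin.castSucc_lt_last i).ne, hi⟩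
    · rintro ⟨hne, hj⟩
      obtain ⟨i, rfl⟩ := Fin.exists_castSucc_eq.mpr hne
      exact ⟨i, hj, rfl⟩
  have h1 : ∑ i ∈ univ.filter (fun i : Fin n => i.castSucc ∈ S), z i
      = ∑ j ∈ S.erase (Fin.last n), Fin.snoc z a j := by
    rw [← himg, Finset.sum_image (fun a _ b _ h => Fin.castSucc_injective n h)]
    simp
  rw [h1]
  by_cases h : Fin.last n ∈ S
  · rw [if_pos h, ← Finset.sum_erase_add S _ h]
    simp
  · rw [if_neg h, Finset.erase_eq_of_notMem h]
    ring

/-- If `z ∈ P(f)` and `C ≥ ‖z‖₁ + M`, then the lifted vector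
`(z₁, …, zₙ, f(E) - z(E))` lies in the base polytope of the lifted function. -/
theorem lifted_point_mem_basePoly (n : ℕ) (hn : 1 ≤ n) (f : Finset (Fin n) → ℝ) (M : ℝ)
    (hsub : Submodular f) (hf0 : f ∅ = 0)
    (hfnn : ∀ S, 0 ≤ f S) (hfM : ∀ S, f S ≤ M)
    (z : Fin n → ℝ) (hz : z ∈ extPolymatroid f)
    (C : ℝ) (hC : (∑ i, |z i|) + M ≤ C) :
    Fin.snoc z (f univ - ∑ i, z i) ∈ basePoly (lifted n f C) := by
  classical
  set a := f univ - ∑ i, z i with ha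
  have habs : ∀ (T : Finset (Fin n)), ∑ i ∈ T, z i ≤ (∑ i, z i) + ∑ i, |z i| := by
    intro T
    have hsplit : ∑ i, z i = ∑ i ∈ T, z i + ∑ i ∈ Tᶜ, z i :=
      (Finset.sum_add_sum_compl T z).symm
    have h2 : ∑ i ∈ Tᶜ, z i ≥ -∑ i, |z i| := by
      have : ∑ i ∈ Tᶜ, (-|z i|) ≤ ∑ i ∈ Tᶜ, z i :=
        Finset.sum_le_sum (fun i _ => neg_abs_le (z i))
      have h3 : ∑ i, (-|z i|) ≤ ∑ i ∈ Tᶜ, (-|z i|) := by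
        have hTn : ∑ i ∈ T, (-|z i|) ≤ 0 :=
          Finset.sum_nonpos (fun i _ => neg_nonpos.mpr (abs_nonneg _))
        have := Finset.sum_add_sum_compl T (fun i => -|z i|)
        linarith
      have := le_trans h3 this
      simpa using this
    linarith
  constructor
  · intro S
    rw [sum_snoc_eq]
    by_cases h : Fin.last n ∈ S
    · rw [if_pos h]
      unfold lifted
      rw [if_pos h]
      by_cases hu : S = univ
      · rw [if_pos hu]
        have : univ.filter (fun i : Fin n => i.castSucc ∈ S) = univ := by
          simp [hu]
        rw [this, ha]
        ring_nf
        exact le_refl _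
      · rw [if_neg hu]
        set T := univ.filter (fun i : Fin n => i.castSucc ∈ S)
        have h1 := habs T
        have h2 := hfM (univ : Finset (Fin n))
        have h3 := hfnn T
        rw [ha]
        linarith
    · rw [if_neg h]
      unfold lifted
      rw [if_neg h]
      simpa using hz (univ.filter (fun i : Fin n => i.castSucc ∈ S))
  · rw [sum_snoc_eq]
    unfold lifted
    simp [ha]
end

section
/- Let f : 2^E → ℤ be submodular with f(∅) = 0 and 0 ≤ f(S) ≤ M for all S ⊆ E, and let d ∈ ℤ^n have at least one strictly positive coordinate. Set d̂ = (d_1,…,d_n, 0) ∈ ℝ^{n+1}, let C ≥ M·(‖d‖₁ + 1), let R > C + M, and define h_R(x) = R·|1 − ⟨d, x_{[n]}⟩| + R·|x_{n+1}| for x ∈ ℝ^{n+1}. Then sup{λ₁ ∈ ℝ : there exists λ₂ ∈ ℝ with λ₁·d̂ + λ₂·e_{n+1} ∈ B(f̂(·;C))} = inf_{x ∈ ℝ^{n+1}} ( F̂(x;C) + h_R(x) ), where F̂(·;C) is the Lovász extension of the lifted function f̂(·;C). -/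
open Finset

private lemma sum_split' {n : ℕ} (S : Finset (Fin (n+1))) (w : Fin (n+1) → ℝ) :
    ∑ j ∈ S, w j =
      (∑ i ∈ univ.filter (fun i : Fin n => i.castSucc ∈ S), w i.castSucc) +
      (if Fin.last n ∈ S then w (Fin.last n) else 0) := by
  have h1 : ∑ j ∈ S, w j = ∑ j : Fin (n+1), if j ∈ S then w j else 0 := by
    rw [Finset.sum_ite_mem, Finset.univ_inter]
  rw [h1, Fin.sum_univ_castSucc, Finset.sum_filter]

private lemma filter_image' {n : ℕ} (A : Finset (Fin n)) :
    Finset.univ.filter (fun i : Fin n => i.castSucc ∈ A.image Fin.castSucc) = A := by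
  ext i
  simp only [Finset.mem_filter, Finset.mem_univ, true_and, Finset.mem_image]
  constructor
  · rintro ⟨a, ha, h⟩; rwa [(Fin.castSucc_injective n) h] at ha
  · exact fun h => ⟨i, h, rfl⟩

private lemma last_notMem_image' {n : ℕ} (A : Finset (Fin n)) :
    Fin.last n ∉ A.image Fin.castSucc := by
  simp only [Finset.mem_image]
  rintro ⟨a, _, h⟩
  exact (Fin.castSucc_lt_last a).ne h

set_option maxHeartbeats 2000000 in
/-- The lifted line search over `B(f̂(·;C))` equals the unconstrained minimum of the
penalized objective `F̂(x;C) + h_R(x)`, for `C ≥ M·(‖d‖₁+1)` and `R > C + M`. -/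
theorem lifted_line_search_dual (n : ℕ) (hn : 1 ≤ n) (f : Finset (Fin n) → ℤ) (M : ℝ)
    (hsub : Submodular (fun S => (f S : ℝ))) (hf0 : f ∅ = 0)
    (hfnn : ∀ S, 0 ≤ (f S : ℝ)) (hfM : ∀ S, (f S : ℝ) ≤ M)
    (d : Fin n → ℤ) (hd : ∃ i, 0 < d i)
    (C : ℝ) (hC : M * ((∑ i, |(d i : ℝ)|) + 1) ≤ C)
    (R : ℝ) (hR : C + M < R) :
    sSup {l₁ : ℝ | ∃ l₂ : ℝ,
        (fun j : Fin (n + 1) =>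
            l₁ * (Fin.snoc (fun i : Fin n => (d i : ℝ)) 0 : Fin (n + 1) → ℝ) j +
            l₂ * (if j = Fin.last n then (1 : ℝ) else 0)) ∈
          basePoly (lifted n (fun S => (f S : ℝ)) C)} =
      sInf (Set.range (fun x : Fin (n + 1) → ℝ =>
        lovasz (lifted n (fun S => (f S : ℝ)) C) x +
          (R * |1 - ∑ i : Fin n, (d i : ℝ) * x i.castSucc| +
            R * |x (Fin.last n)|))) := by
  classical
  obtain ⟨i₀, hi₀⟩ := hd
  set g : Finset (Fin (n+1)) → ℝ := lifted n (fun S => (f S : ℝ)) C with hg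
  set A : ℝ := ∑ i, |(d i : ℝ)| with hA
  have hM0 : (0:ℝ) ≤ M := by have := hfM ∅; rw [hf0] at this; simpa using this
  have hA0 : (0:ℝ) ≤ A := Finset.sum_nonneg fun i _ => abs_nonneg _
  have hMA : M * A + M ≤ C := by nlinarith [hC]
  have hMC : M ≤ C := by nlinarith
  have hC0 : (0:ℝ) ≤ C := le_trans hM0 hMC
  -- basic facts about g
  have hgL : ∀ S : Finset (Fin (n+1)), g S ≤ M + C := by
    intro S
    simp only [hg, lifted]
    split_ifs
    · linarith [hfM univ]
    · linarith [hfM (univ.filter (fun i : Fin n => i.castSucc ∈ S))]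
    · linarith [hfM (univ.filter (fun i : Fin n => i.castSucc ∈ S))]
  have hguniv : g univ = (f univ : ℝ) := by simp [hg, lifted]
  have hgimage : ∀ B : Finset (Fin n), g (B.image Fin.castSucc) = (f B : ℝ) := by
    intro B
    simp only [hg, lifted, if_neg (last_notMem_image' B), filter_image']
  -- lam and its properties
  have hdi₀ : (1:ℝ) ≤ (d i₀ : ℝ) := by exact_mod_cast hi₀
  set 𝒯 : Finset (Finset (Fin n)) := univ.filter (fun S => 0 < ∑ i ∈ S, (d i : ℝ)) with hT
  have hi₀T : ({i₀} : Finset (Fin n)) ∈ 𝒯 := by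
    simp only [hT, Finset.mem_filter, Finset.mem_univ, true_and, Finset.sum_singleton]
    linarith
  have hTne : 𝒯.Nonempty := ⟨{i₀}, hi₀T⟩
  set lam : ℝ := 𝒯.inf' hTne (fun S => (f S : ℝ) / (∑ i ∈ S, (d i : ℝ))) with hlam
  have hmemT : ∀ S : Finset (Fin n), 0 < ∑ i ∈ S, (d i : ℝ) → S ∈ 𝒯 := by
    intro S h
    simp only [hT, Finset.mem_filter, Finset.mem_univ, true_and]
    exact h
  have hlam_le : ∀ S : Finset (Fin n), 0 < ∑ i ∈ S, (d i : ℝ) →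
      lam * (∑ i ∈ S, (d i : ℝ)) ≤ (f S : ℝ) := by
    intro S h
    have h1 : lam ≤ (f S : ℝ) / (∑ i ∈ S, (d i : ℝ)) :=
      Finset.inf'_le (fun S => (f S : ℝ) / (∑ i ∈ S, (d i : ℝ))) (hmemT S h)
    calc lam * (∑ i ∈ S, (d i : ℝ))
        ≤ ((f S : ℝ) / (∑ i ∈ S, (d i : ℝ))) * (∑ i ∈ S, (d i : ℝ)) :=
          mul_le_mul_of_nonneg_right h1 (le_of_lt h)
      _ = (f S : ℝ) := div_mul_cancel₀ _ (ne_of_gt h)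
  have hlam0 : 0 ≤ lam := by
    apply Finset.le_inf'
    intro S hS
    have hS' : 0 < ∑ i ∈ S, (d i : ℝ) := by
      simpa only [hT, Finset.mem_filter, Finset.mem_univ, true_and] using hS
    exact div_nonneg (hfnn S) (le_of_lt hS')
  have hlamM : lam ≤ M := by
    have h2 : lam ≤ (f {i₀} : ℝ) / (∑ i ∈ ({i₀} : Finset (Fin n)), (d i : ℝ)) :=
      Finset.inf'_le _ hi₀T
    rw [Finset.sum_singleton] at h2
    have h3 : (f {i₀} : ℝ) / (d i₀ : ℝ) ≤ M := by
      rw [div_le_iff₀ (by linarith)]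
      nlinarith [hfM ({i₀} : Finset (Fin n)), hfnn ({i₀} : Finset (Fin n))]
    linarith
  obtain ⟨S₀, hS₀T, hS₀⟩ := Finset.exists_mem_eq_inf' hTne (fun S => (f S : ℝ) / (∑ i ∈ S, (d i : ℝ)))
  have hdS₀ : 0 < ∑ i ∈ S₀, (d i : ℝ) := by
    simpa only [hT, Finset.mem_filter, Finset.mem_univ, true_and] using hS₀T
  have hlamS₀ : lam = (f S₀ : ℝ) / (∑ i ∈ S₀, (d i : ℝ)) := hS₀
  set lam2 : ℝ := (f univ : ℝ) - lam * ∑ i, (d i : ℝ) with hlam2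
  have hlam2C : |lam2| ≤ C := by
    have h2 : |∑ i, (d i : ℝ)| ≤ A := Finset.abs_sum_le_sum_abs _ _
    have h3 : |lam * ∑ i, (d i : ℝ)| ≤ M * A := by
      rw [abs_mul, abs_of_nonneg hlam0]
      exact mul_le_mul hlamM h2 (abs_nonneg _) hM0
    obtain ⟨h3l, h3r⟩ := abs_le.mp h3
    rw [abs_le]
    constructor <;> [skip; skip] <;> simp only [hlam2] <;>
      nlinarith [hfnn univ, hfM univ]
  -- the optimal dual vector v
  set v : Fin (n+1) → ℝ := fun j =>
      lam * (Fin.snoc (fun i : Fin n => (d i : ℝ)) 0 : Fin (n + 1) → ℝ) j +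
      lam2 * (if j = Fin.last n then (1 : ℝ) else 0) with hv
  have hvcast : ∀ i : Fin n, v i.castSucc = lam * (d i : ℝ) := by
    intro i
    simp [hv, Fin.snoc_castSucc, (Fin.castSucc_lt_last i).ne]
  have hvlast : v (Fin.last n) = lam2 := by simp [hv]
  have hvsum : ∀ S : Finset (Fin (n+1)),
      ∑ j ∈ S, v j = lam * (∑ i ∈ univ.filter (fun i : Fin n => i.castSucc ∈ S), (d i : ℝ))
        + (if Fin.last n ∈ S then lam2 else 0) := by
    intro S
    rw [sum_split' S v, Finset.mul_sum]
    congr 1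
    · exact Finset.sum_congr rfl fun i _ => hvcast i
    · split_ifs <;> simp [hvlast]
  have hfiltuniv : univ.filter (fun i : Fin n => i.castSucc ∈ (univ : Finset (Fin (n+1)))) = univ := by
    simp
  have hvB : v ∈ basePoly g := by
    constructor
    · intro S
      rw [hvsum S]
      set B : Finset (Fin n) := univ.filter (fun i : Fin n => i.castSucc ∈ S) with hB
      by_cases hl : Fin.last n ∈ S
      · rw [if_pos hl]
        have hkey : lam * (∑ i ∈ B, (d i : ℝ)) + lam2 ≤ (f B : ℝ) + C := by
          have hsd : (∑ i ∈ univ \ B, (d i : ℝ)) + (∑ i ∈ B, (d i : ℝ)) = ∑ i, (d i : ℝ) :=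
            Finset.sum_sdiff (Finset.subset_univ B)
          have habs : |∑ i ∈ univ \ B, (d i : ℝ)| ≤ A := by
            calc |∑ i ∈ univ \ B, (d i : ℝ)| ≤ ∑ i ∈ univ \ B, |(d i : ℝ)| :=
                  Finset.abs_sum_le_sum_abs _ _
              _ ≤ A := Finset.sum_le_sum_of_subset_of_nonneg (Finset.sdiff_subset)
                  (fun i _ _ => abs_nonneg _)
          have h1 : |lam * (∑ i ∈ univ \ B, (d i : ℝ))| ≤ M * A := by
            rw [abs_mul, abs_of_nonneg hlam0]
            exact mul_le_mul hlamM habs (abs_nonneg _) hM0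
          obtain ⟨h1l, h1r⟩ := abs_le.mp h1
          have hexp : lam * (∑ i ∈ B, (d i : ℝ)) + lam2
              = (f univ : ℝ) - lam * (∑ i ∈ univ \ B, (d i : ℝ)) := by
            simp only [hlam2]
            rw [← hsd]
            ring
          rw [hexp]
          linarith [hfnn B, hfM univ]
        by_cases hu : S = univ
        · have hBu : B = univ := by rw [hB, hu]; exact hfiltuniv
          have hgS : g S = (f univ : ℝ) := by rw [hu, hguniv]
          rw [hgS, hBu]
          simp only [hlam2]
          linarith
        · have hgS : g S = (f B : ℝ) + C := by
            simp only [hg, lifted, if_pos hl, if_neg hu, hB]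
          rw [hgS]
          exact hkey
      · rw [if_neg hl, add_zero]
        have hgS : g S = (f B : ℝ) := by
          simp only [hg, lifted, if_neg hl, hB]
        rw [hgS]
        by_cases hp : 0 < ∑ i ∈ B, (d i : ℝ)
        · exact hlam_le B hp
        · push_neg at hp
          nlinarith [hfnn B, mul_nonneg hlam0 (neg_nonneg.mpr hp)]
    · rw [hguniv, hvsum univ, if_pos (Finset.mem_univ _), hfiltuniv]
      simp only [hlam2]
      ring
  -- boundedness of the image of the base polytope
  have hvbound : ∀ w ∈ basePoly g, ∀ j, |w j| ≤ M + C := by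
    intro w hw j
    obtain ⟨hw1, hw2⟩ := hw
    have hup : w j ≤ M + C := by
      have h1 := hw1 {j}
      rw [Finset.sum_singleton] at h1
      linarith [hgL {j}]
    have h2 : ∑ i ∈ univ.erase j, w i + w j = ∑ i, w i :=
      Finset.sum_erase_add _ _ (Finset.mem_univ j)
    have hlo : -(M + C) ≤ w j := by
      have h1 := hw1 (univ.erase j)
      have h3 := hgL (univ.erase j)
      have h4 : (0:ℝ) ≤ (f univ : ℝ) := hfnn univ
      rw [hguniv] at hw2
      linarith
    exact abs_le.mpr ⟨hlo, hup⟩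
  have hBdd : ∀ x : Fin (n+1) → ℝ,
      BddAbove ((fun v : Fin (n+1) → ℝ => ∑ i, v i * x i) '' basePoly g) := by
    intro x
    refine ⟨(M + C) * ∑ j, |x j|, ?_⟩
    rintro y ⟨w, hw, rfl⟩
    calc ∑ i, w i * x i ≤ ∑ i, (M + C) * |x i| := by
          apply Finset.sum_le_sum
          intro i _
          calc w i * x i ≤ |w i * x i| := le_abs_self _
            _ = |w i| * |x i| := abs_mul _ _
            _ ≤ (M + C) * |x i| := mul_le_mul_of_nonneg_right (hvbound w hw i) (abs_nonneg _)
      _ = (M + C) * ∑ j, |x j| := (Finset.mul_sum _ _ _).symm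
  -- weak duality: lam is a lower bound of the objective
  have hlamR : lam ≤ R := by linarith
  have hlam2R : |lam2| ≤ R := by linarith
  have hlow : ∀ x : Fin (n+1) → ℝ,
      lam ≤ lovasz g x +
        (R * |1 - ∑ i : Fin n, (d i : ℝ) * x i.castSucc| + R * |x (Fin.last n)|) := by
    intro x
    have h1 : ∑ j, v j * x j ≤ lovasz g x := le_csSup (hBdd x) ⟨v, hvB, rfl⟩
    have h2 : ∑ j, v j * x j
        = lam * (∑ i : Fin n, (d i : ℝ) * x i.castSucc) + lam2 * x (Fin.last n) := by
      rw [Fin.sum_univ_castSucc, hvlast, Finset.mul_sum]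
      congr 1
      exact Finset.sum_congr rfl fun i _ => by rw [hvcast i]; ring
    rw [h2] at h1
    set a := ∑ i : Fin n, (d i : ℝ) * x i.castSucc with ha
    set b := x (Fin.last n) with hb
    have e0 : lam * (1 - a) = lam - lam * a := by ring
    have e1 : lam * (1 - a) ≤ R * |1 - a| := by
      calc lam * (1 - a) ≤ lam * |1 - a| :=
            mul_le_mul_of_nonneg_left (le_abs_self _) hlam0
        _ ≤ R * |1 - a| := mul_le_mul_of_nonneg_right hlamR (abs_nonneg _)
    have e2 : -(lam2 * b) ≤ R * |b| := by
      have u1 : -(lam2 * b) ≤ |lam2 * b| := neg_le_abs _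
      have u2 : |lam2 * b| = |lam2| * |b| := abs_mul _ _
      have u3 : |lam2| * |b| ≤ R * |b| := mul_le_mul_of_nonneg_right hlam2R (abs_nonneg _)
      linarith
    linarith
  -- the optimal primal point xs
  set xs : Fin (n+1) → ℝ :=
    Fin.snoc (fun i : Fin n => if i ∈ S₀ then (∑ i ∈ S₀, (d i : ℝ))⁻¹ else 0) 0 with hxs
  have hxsc : ∀ i : Fin n,
      xs i.castSucc = if i ∈ S₀ then (∑ i ∈ S₀, (d i : ℝ))⁻¹ else 0 := by
    intro i; simp [hxs]
  have hxsl : xs (Fin.last n) = 0 := by simp [hxs]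
  have hxa : ∑ i : Fin n, (d i : ℝ) * xs i.castSucc = 1 := by
    simp only [hxsc, mul_ite, mul_zero]
    rw [Finset.sum_ite_mem, Finset.univ_inter, ← Finset.sum_mul,
      mul_inv_cancel₀ (ne_of_gt hdS₀)]
  have hFxs : lovasz g xs ≤ lam := by
    apply Real.sSup_le _ hlam0
    rintro y ⟨w, hw, rfl⟩
    show ∑ j, w j * xs j ≤ lam
    have h1 : ∑ j, w j * xs j = (∑ i ∈ S₀, w i.castSucc) * (∑ i ∈ S₀, (d i : ℝ))⁻¹ := by
      rw [Fin.sum_univ_castSucc, hxsl, mul_zero, add_zero]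
      simp only [hxsc, mul_ite, mul_zero]
      rw [Finset.sum_ite_mem, Finset.univ_inter, Finset.sum_mul]
    have h2 : ∑ i ∈ S₀, w i.castSucc ≤ (f S₀ : ℝ) := by
      have h3 := hw.1 (S₀.image Fin.castSucc)
      rw [hgimage S₀] at h3
      rwa [Finset.sum_image (fun a _ b _ h => Fin.castSucc_injective n h)] at h3
    rw [h1, hlamS₀, div_eq_mul_inv]
    exact mul_le_mul_of_nonneg_right h2 (inv_nonneg.mpr (le_of_lt hdS₀))
  -- the sup side
  have hmem : lam ∈ {l₁ : ℝ | ∃ l₂ : ℝ,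
      (fun j : Fin (n + 1) =>
          l₁ * (Fin.snoc (fun i : Fin n => (d i : ℝ)) 0 : Fin (n + 1) → ℝ) j +
          l₂ * (if j = Fin.last n then (1 : ℝ) else 0)) ∈ basePoly g} :=
    ⟨lam2, hv ▸ hvB⟩
  have hub : ∀ l₁ ∈ {l₁ : ℝ | ∃ l₂ : ℝ,
      (fun j : Fin (n + 1) =>
          l₁ * (Fin.snoc (fun i : Fin n => (d i : ℝ)) 0 : Fin (n + 1) → ℝ) j +
          l₂ * (if j = Fin.last n then (1 : ℝ) else 0)) ∈ basePoly g}, l₁ ≤ lam := by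
    rintro l₁ ⟨l₂, hl⟩
    have h1 := hl.1 (S₀.image Fin.castSucc)
    rw [hgimage S₀] at h1
    have h2 : ∑ j ∈ S₀.image Fin.castSucc,
        (l₁ * (Fin.snoc (fun i : Fin n => (d i : ℝ)) 0 : Fin (n + 1) → ℝ) j +
          l₂ * (if j = Fin.last n then (1 : ℝ) else 0))
        = l₁ * ∑ i ∈ S₀, (d i : ℝ) := by
      rw [Finset.sum_image (fun a _ b _ h => Fin.castSucc_injective n h), Finset.mul_sum]
      apply Finset.sum_congr rfl
      intro i _
      simp [Fin.snoc_castSucc, (Fin.castSucc_lt_last i).ne]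
    rw [h2] at h1
    rw [hlamS₀, le_div_iff₀ hdS₀]
    linarith
  have hsup : sSup {l₁ : ℝ | ∃ l₂ : ℝ,
      (fun j : Fin (n + 1) =>
          l₁ * (Fin.snoc (fun i : Fin n => (d i : ℝ)) 0 : Fin (n + 1) → ℝ) j +
          l₂ * (if j = Fin.last n then (1 : ℝ) else 0)) ∈ basePoly g} = lam :=
    le_antisymm (Real.sSup_le hub hlam0) (le_csSup ⟨lam, hub⟩ hmem)
  -- the inf side
  have hlb : ∀ y ∈ Set.range (fun x : Fin (n + 1) → ℝ =>
      lovasz g x + (R * |1 - ∑ i : Fin n, (d i : ℝ) * x i.castSucc| +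
        R * |x (Fin.last n)|)), lam ≤ y := by
    rintro y ⟨x, rfl⟩
    exact hlow x
  have hinf : sInf (Set.range (fun x : Fin (n + 1) → ℝ =>
      lovasz g x + (R * |1 - ∑ i : Fin n, (d i : ℝ) * x i.castSucc| +
        R * |x (Fin.last n)|))) = lam := by
    apply le_antisymm
    · calc sInf _ ≤ lovasz g xs +
            (R * |1 - ∑ i : Fin n, (d i : ℝ) * xs i.castSucc| + R * |xs (Fin.last n)|) :=
          csInf_le ⟨lam, hlb⟩ ⟨xs, rfl⟩
        _ ≤ lam := by rw [hxa, hxsl]; simpa using hFxs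
    · exact le_csInf ⟨_, ⟨0, rfl⟩⟩ hlb
  rw [hsup, hinf]
end

section
/- Let f : 2^E → ℤ be submodular with f(∅) = 0 and 0 ≤ f(S) ≤ M for all S ⊆ E, let d ∈ ℤ^n be nonzero, let C ≥ M·(‖d‖₁ + 1), and let R > C + M. Define the penalized objective Φ(x) = F̂(x;C) + R·|1 − ⟨d, x_{[n]}⟩| + R·|x_{n+1}| for x ∈ ℝ^{n+1}, where F̂(·;C) is the Lovász extension of the lifted function f̂(·;C). Then every global minimizer x* of Φ satisfies both ⟨d, x*_{[n]}⟩ = 1 and x*_{n+1} = 0. -/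
open Finset

lemma greedy_mem {m : ℕ} (f : Finset (Fin m) → ℝ) (hsub : Submodular f) (hf0 : f ∅ = 0)
    (S : Finset (Fin m)) :
    ∑ i ∈ S, (f (Finset.Iic i) - f (Finset.Iio i)) ≤ f S := by
  induction S using Finset.strongInduction with
  | _ S ih =>
    rcases S.eq_empty_or_nonempty with rfl | hS
    · simp [hf0]
    · set j := S.max' hS with hj
      have hjS : j ∈ S := S.max'_mem hS
      have IH := ih _ (Finset.erase_ssubset hjS)
      have hsum : ∑ i ∈ S, (f (Finset.Iic i) - f (Finset.Iio i))
          = (f (Finset.Iic j) - f (Finset.Iio j))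
            + ∑ i ∈ S.erase j, (f (Finset.Iic i) - f (Finset.Iio i)) :=
        (Finset.add_sum_erase _ _ hjS).symm
      have hcap : S ∩ Finset.Iio j = S.erase j := by
        ext i
        simp only [Finset.mem_inter, Finset.mem_Iio, Finset.mem_erase]
        constructor
        · rintro ⟨hi, hlt⟩; exact ⟨ne_of_lt hlt, hi⟩
        · rintro ⟨hne, hi⟩; exact ⟨hi, lt_of_le_of_ne (S.le_max' i hi) hne⟩
      have hcup : S ∪ Finset.Iio j = Finset.Iic j := by
        ext i
        simp only [Finset.mem_union, Finset.mem_Iio, Finset.mem_Iic]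
        constructor
        · rintro (hi | hlt)
          exacts [S.le_max' i hi, le_of_lt hlt]
        · intro hle
          rcases eq_or_lt_of_le hle with h | h
          · exact Or.inl (h ▸ hjS)
          · exact Or.inr h
      have hsm := hsub S (Finset.Iio j)
      rw [hcap, hcup] at hsm
      linarith

lemma greedy_total {m : ℕ} (f : Finset (Fin m) → ℝ) (hf0 : f ∅ = 0) :
    ∑ i : Fin m, (f (Finset.Iic i) - f (Finset.Iio i)) = f Finset.univ := by
  set u : ℕ → ℝ := fun k => f (Finset.univ.filter (fun j : Fin m => (j : ℕ) < k)) with hu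
  have h1 : ∀ i : Fin m, f (Finset.Iic i) = u ((i : ℕ) + 1) := by
    intro i
    congr 1
    ext j
    simp only [Finset.mem_Iic, Finset.mem_filter, Finset.mem_univ, true_and, Fin.le_def]
    omega
  have h2 : ∀ i : Fin m, f (Finset.Iio i) = u (i : ℕ) := by
    intro i
    congr 1
    ext j
    simp only [Finset.mem_Iio, Finset.mem_filter, Finset.mem_univ, true_and, Fin.lt_def]
  calc ∑ i : Fin m, (f (Finset.Iic i) - f (Finset.Iio i))
      = ∑ i : Fin m, (u ((i:ℕ)+1) - u (i:ℕ)) :=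
        Finset.sum_congr rfl (fun i _ => by rw [h1, h2])
    _ = ∑ k ∈ Finset.range m, (u (k+1) - u k) :=
        Fin.sum_univ_eq_sum_range (fun k => u (k+1) - u k) m
    _ = u m - u 0 := Finset.sum_range_sub u m
    _ = f Finset.univ := by
        have hm : u m = f Finset.univ := by
          simp only [hu]
          congr 1
          ext j
          simp [j.isLt]
        have h0 : u 0 = 0 := by
          simp only [hu]
          rw [show (Finset.univ.filter (fun j : Fin m => (j:ℕ) < 0)) = ∅ by
            ext j; simp]
          exact hf0
        rw [hm, h0]; ring

/-- Every global minimizer of the lifted penalized objective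
`Φ(x) = F̂(x;C) + R·|1 - ⟨d, x_{[n]}⟩| + R·|x_{n+1}|` (with `C ≥ M·(‖d‖₁+1)`, `R > C + M`)
satisfies `⟨d, x_{[n]}⟩ = 1` and `x_{n+1} = 0`. -/
theorem lifted_penalty_active (n : ℕ) (hn : 1 ≤ n) (f : Finset (Fin n) → ℤ) (M : ℝ)
    (hsub : Submodular (fun S => (f S : ℝ))) (hf0 : f ∅ = 0)
    (hfnn : ∀ S, 0 ≤ (f S : ℝ)) (hfM : ∀ S, (f S : ℝ) ≤ M)
    (d : Fin n → ℤ) (hd : d ≠ 0)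
    (C : ℝ) (hC : M * ((∑ i, |(d i : ℝ)|) + 1) ≤ C)
    (R : ℝ) (hR : C + M < R)
    (x : Fin (n + 1) → ℝ)
    (hmin : ∀ z : Fin (n + 1) → ℝ,
      lovasz (lifted n (fun S => (f S : ℝ)) C) x +
          (R * |1 - ∑ i : Fin n, (d i : ℝ) * x i.castSucc| + R * |x (Fin.last n)|) ≤
        lovasz (lifted n (fun S => (f S : ℝ)) C) z +
          (R * |1 - ∑ i : Fin n, (d i : ℝ) * z i.castSucc| + R * |z (Fin.last n)|)) :
    (∑ i : Fin n, (d i : ℝ) * x i.castSucc) = 1 ∧ x (Fin.last n) = 0 := by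
  classical
  have hM0 : 0 ≤ M := le_trans (hfnn ∅) (hfM ∅)
  have hC0 : 0 ≤ C := le_trans (mul_nonneg hM0 (by positivity)) hC
  set fr : Finset (Fin n) → ℝ := fun S => (f S : ℝ) with hfr
  have hfr0 : fr ∅ = 0 := by simp [hfr, hf0]
  set g := lifted n fr C with hg
  have hlastne : ∀ i : Fin n, i.castSucc ≠ Fin.last n := fun i => (Fin.castSucc_lt_last i).ne
  have hgval_not : ∀ S : Finset (Fin (n+1)), Fin.last n ∉ S →
      g S = fr (univ.filter (fun i : Fin n => i.castSucc ∈ S)) := by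
    intro S hS; simp [hg, lifted, hS]
  have hgval_mid : ∀ S : Finset (Fin (n+1)), Fin.last n ∈ S → S ≠ univ →
      g S = fr (univ.filter (fun i : Fin n => i.castSucc ∈ S)) + C := by
    intro S h1 h2; simp [hg, lifted, h1, h2]
  have hguniv : g univ = fr univ := by simp [hg, lifted]
  set w : Fin n → ℝ := fun i => fr (Finset.Iic i) - fr (Finset.Iio i) with hw
  have hgr : ∀ T : Finset (Fin n), ∑ i ∈ T, w i ≤ fr T := greedy_mem fr hsub hfr0
  have htot : ∑ i, w i = fr univ := greedy_total fr hfr0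
  set v₀ : Fin (n+1) → ℝ := Fin.snoc w 0 with hv0def
  have himg : ∀ S : Finset (Fin (n+1)),
      (univ.filter (fun i : Fin n => i.castSucc ∈ S)).image Fin.castSucc
        = S.erase (Fin.last n) := by
    intro S
    ext k
    simp only [Finset.mem_image, Finset.mem_filter, Finset.mem_univ, true_and,
      Finset.mem_erase]
    constructor
    · rintro ⟨i, hi, rfl⟩; exact ⟨hlastne i, hi⟩
    · rintro ⟨hne, hk⟩
      refine ⟨k.castPred hne, ?_, Fin.castSucc_castPred k hne⟩
      rw [Fin.castSucc_castPred]; exact hk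
  have hsum0 : ∀ S : Finset (Fin (n+1)),
      ∑ k ∈ S, v₀ k = ∑ i ∈ univ.filter (fun i : Fin n => i.castSucc ∈ S), w i := by
    intro S
    have h1 : ∑ k ∈ S.erase (Fin.last n), v₀ k = ∑ k ∈ S, v₀ k :=
      Finset.sum_erase _ (by rw [hv0def]; simp)
    rw [← h1, ← himg S,
      Finset.sum_image (fun a _ b _ h => Fin.castSucc_injective n h)]
    exact Finset.sum_congr rfl (fun i _ => by rw [hv0def]; simp)
  have hfilter_univ :
      (univ.filter (fun i : Fin n => i.castSucc ∈ (univ : Finset (Fin (n+1))))) = univ := by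
    simp
  have hv₀ : v₀ ∈ basePoly g := by
    constructor
    · intro S
      rw [hsum0 S]
      by_cases hl : Fin.last n ∈ S
      · by_cases huS : S = univ
        · subst huS
          rw [hguniv, hfilter_univ]
          exact le_of_eq htot
        · rw [hgval_mid S hl huS]
          linarith [hgr (univ.filter (fun i : Fin n => i.castSucc ∈ S))]
      · rw [hgval_not S hl]
        exact hgr _
    · rw [hsum0 univ, hfilter_univ, hguniv]
      exact htot
  have hub : ∀ v ∈ basePoly g, ∀ k, v k ≤ g {k} := by
    intro v hv k
    have := hv.1 {k}
    simpa using this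
  have hlb : ∀ v ∈ basePoly g, ∀ k, g univ - g (univ.erase k) ≤ v k := by
    intro v hv k
    have h1 := hv.1 (univ.erase k)
    have h2 : v k + ∑ i ∈ univ.erase k, v i = ∑ i, v i :=
      Finset.add_sum_erase _ _ (mem_univ k)
    have h3 := hv.2
    linarith
  have hglast : g ({Fin.last n} : Finset (Fin (n+1))) = C := by
    have hne : ({Fin.last n} : Finset (Fin (n+1))) ≠ univ := by
      intro h
      have h2 : (⟨0, hn⟩ : Fin n).castSucc ∈ ({Fin.last n} : Finset (Fin (n+1))) := by
        rw [h]; exact mem_univ _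
      rw [Finset.mem_singleton] at h2
      exact hlastne _ h2
    rw [hgval_mid _ (Finset.mem_singleton_self _) hne]
    have he : (univ.filter (fun i : Fin n =>
        i.castSucc ∈ ({Fin.last n} : Finset (Fin (n+1))))) = ∅ := by
      ext i
      simp only [Finset.mem_filter, Finset.mem_univ, Finset.mem_singleton, true_and,
        Finset.notMem_empty, iff_false]
      exact hlastne i
    rw [he, hfr0]; ring
  have hgerase_last : g (univ.erase (Fin.last n)) = fr univ := by
    rw [hgval_not _ (Finset.notMem_erase _ _)]
    congr 1
    ext i
    simp [Finset.mem_erase, hlastne i]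
  have hgsingle : ∀ i : Fin n, g ({i.castSucc} : Finset (Fin (n+1))) = fr {i} := by
    intro i
    rw [hgval_not _ (by rw [Finset.mem_singleton]; exact fun h => hlastne i h.symm)]
    congr 1
    ext j
    simp [Fin.castSucc_inj]
  have hgerase : ∀ i : Fin n, g (univ.erase i.castSucc) = fr (univ.erase i) + C := by
    intro i
    have h1 : Fin.last n ∈ univ.erase i.castSucc := by
      rw [Finset.mem_erase]
      exact ⟨fun h => hlastne i h.symm, mem_univ _⟩
    have h2 : univ.erase i.castSucc ≠ univ := by
      intro h
      have : i.castSucc ∈ univ.erase i.castSucc := by rw [h]; exact mem_univ _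
      exact (Finset.notMem_erase _ _) this
    rw [hgval_mid _ h1 h2]
    have he : (univ.filter (fun j : Fin n => j.castSucc ∈ univ.erase i.castSucc))
        = univ.erase i := by
      ext j
      simp [Finset.mem_erase, Fin.castSucc_inj]
    rw [he]
  have hvlast : ∀ v ∈ basePoly g, 0 ≤ v (Fin.last n) ∧ v (Fin.last n) ≤ C := by
    intro v hv
    have h1 := hub v hv (Fin.last n)
    have h2 := hlb v hv (Fin.last n)
    rw [hglast] at h1
    rw [hguniv, hgerase_last] at h2
    constructor <;> linarith
  have hvcoord : ∀ v ∈ basePoly g, ∀ i : Fin n, |v i.castSucc| ≤ M + C := by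
    intro v hv i
    have h1 := hub v hv i.castSucc
    have h2 := hlb v hv i.castSucc
    rw [hgsingle i] at h1
    rw [hguniv, hgerase i] at h2
    have ha : (0:ℝ) ≤ fr univ := hfnn univ
    have hb : fr (univ.erase i) ≤ M := hfM _
    have hc : fr {i} ≤ M := hfM _
    rw [abs_le]
    constructor <;> linarith
  have habs : ∀ v ∈ basePoly g, ∀ k, |v k| ≤ M + C := by
    intro v hv k
    induction k using Fin.lastCases with
    | last =>
      have h := hvlast v hv
      rw [abs_le]
      constructor <;> linarith
    | cast i => exact hvcoord v hv i
  have hImne : ∀ z : Fin (n+1) → ℝ,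
      ((fun v : Fin (n+1) → ℝ => ∑ i, v i * z i) '' basePoly g).Nonempty :=
    fun z => ⟨_, ⟨v₀, hv₀, rfl⟩⟩
  have hbdd : ∀ z : Fin (n+1) → ℝ,
      BddAbove ((fun v : Fin (n+1) → ℝ => ∑ i, v i * z i) '' basePoly g) := by
    intro z
    refine ⟨∑ i, (M + C) * |z i|, ?_⟩
    rintro y ⟨v, hv, rfl⟩
    apply Finset.sum_le_sum
    intro k _
    calc v k * z k ≤ |v k * z k| := le_abs_self _
      _ = |v k| * |z k| := abs_mul _ _
      _ ≤ (M + C) * |z k| := mul_le_mul_of_nonneg_right (habs v hv k) (abs_nonneg _)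
  have hlip : ∀ (z : Fin (n+1) → ℝ) (k : Fin (n+1)) (t Bk : ℝ),
      (∀ v ∈ basePoly g, |v k| ≤ Bk) →
      lovasz g (Function.update z k (z k + t)) ≤ lovasz g z + Bk * |t| := by
    intro z k t Bk hBk
    unfold lovasz
    apply csSup_le (hImne _)
    rintro y ⟨v, hv, rfl⟩
    dsimp only
    have h1 : ∑ i, v i * (Function.update z k (z k + t)) i
        = (∑ i, v i * z i) + v k * t := by
      have he : ∀ i, v i * (Function.update z k (z k + t)) i
          = v i * z i + (if i = k then v k * t else 0) := by
        intro i
        by_cases h : i = k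
        · subst h
          rw [Function.update_self, if_pos rfl]
          ring
        · rw [Function.update_of_ne h, if_neg h, add_zero]
      rw [Finset.sum_congr rfl (fun i _ => he i), Finset.sum_add_distrib,
        Finset.sum_ite_eq' univ k (fun _ => v k * t)]
      simp
    rw [h1]
    have h2 : (∑ i, v i * z i)
        ≤ sSup ((fun v : Fin (n+1) → ℝ => ∑ i, v i * z i) '' basePoly g) :=
      le_csSup (hbdd z) ⟨v, hv, rfl⟩
    have h3 : v k * t ≤ Bk * |t| := by
      calc v k * t ≤ |v k * t| := le_abs_self _
        _ = |v k| * |t| := abs_mul _ _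
        _ ≤ Bk * |t| := mul_le_mul_of_nonneg_right (hBk v hv) (abs_nonneg _)
    linarith
  set s := ∑ i : Fin n, (d i : ℝ) * x i.castSucc with hs
  have hxlast : x (Fin.last n) = 0 := by
    have hF := hlip x (Fin.last n) (-(x (Fin.last n))) C
      (fun v hv => abs_le.mpr
        ⟨by linarith [(hvlast v hv).1, hC0], (hvlast v hv).2⟩)
    set z := Function.update x (Fin.last n) (x (Fin.last n) + -x (Fin.last n)) with hz
    have hzlast : z (Fin.last n) = 0 := by rw [hz, Function.update_self]; ring
    have hzc : ∀ i : Fin n, z i.castSucc = x i.castSucc :=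
      fun i => Function.update_of_ne (hlastne i) _ _
    have hmz := hmin z
    have hsumz : ∑ i : Fin n, (d i : ℝ) * z i.castSucc = s := by
      rw [hs]; exact Finset.sum_congr rfl (fun i _ => by rw [hzc i])
    rw [hzlast, hsumz] at hmz
    simp only [abs_zero, mul_zero, add_zero] at hmz
    rw [abs_neg] at hF
    have hle : |x (Fin.last n)| ≤ 0 := by nlinarith [abs_nonneg (x (Fin.last n))]
    exact abs_eq_zero.mp (le_antisymm hle (abs_nonneg _))
  have hdj : ∃ j, d j ≠ 0 := by
    by_contra h
    push_neg at h
    exact hd (funext h)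
  obtain ⟨j, hj⟩ := hdj
  have hjR : (d j : ℝ) ≠ 0 := Int.cast_ne_zero.mpr hj
  have hj1 : (1:ℝ) ≤ |(d j : ℝ)| := by
    rw [← Int.cast_abs]
    exact_mod_cast Int.one_le_abs hj
  have hsum1 : s = 1 := by
    set δ := 1 - s with hδ
    set t := δ / (d j : ℝ) with ht
    have hF := hlip x j.castSucc t (M + C) (fun v hv => hvcoord v hv j)
    set z := Function.update x j.castSucc (x j.castSucc + t) with hz
    have hzlast : z (Fin.last n) = x (Fin.last n) :=
      Function.update_of_ne (fun h => hlastne j h.symm) _ _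
    have hsumz : ∑ i : Fin n, (d i : ℝ) * z i.castSucc = 1 := by
      have he : ∀ i : Fin n, (d i : ℝ) * z i.castSucc
          = (d i : ℝ) * x i.castSucc + (if i = j then (d j : ℝ) * t else 0) := by
        intro i
        by_cases h : i = j
        · subst h
          rw [hz, Function.update_self, if_pos rfl]
          ring
        · rw [hz, Function.update_of_ne (fun hc => h (Fin.castSucc_injective n hc)),
            if_neg h, add_zero]
      rw [Finset.sum_congr rfl (fun i _ => he i), Finset.sum_add_distrib,
        Finset.sum_ite_eq' univ j (fun _ => (d j : ℝ) * t)]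
      simp only [Finset.mem_univ, if_true]
      rw [ht, mul_comm ((d j : ℝ)), div_mul_cancel₀ _ hjR, ← hs, hδ]
      ring
    have htle : |t| ≤ |δ| := by
      rw [ht, abs_div]
      exact div_le_self (abs_nonneg _) hj1
    have hmz := hmin z
    rw [hzlast, hsumz] at hmz
    simp only [sub_self, abs_zero, mul_zero, zero_add] at hmz
    have hδabs : |1 - s| = |δ| := by rw [hδ]
    rw [hδabs] at hmz
    have hMC : (M + C) * |t| ≤ (M + C) * |δ| :=
      mul_le_mul_of_nonneg_left htle (by linarith)
    have hδle : |δ| ≤ 0 := by nlinarith [abs_nonneg δ]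
    have : δ = 0 := abs_eq_zero.mp (le_antisymm hδle (abs_nonneg _))
    rw [hδ] at this
    linarith
  exact ⟨hsum1, hxlast⟩
end

section
/- Let f : 2^E → ℤ be submodular with f(∅) = 0 and 0 ≤ f(S) ≤ M for all S ⊆ E, let d ∈ ℤ^n be nonzero, let C ≥ M·(‖d‖₁ + 1), and let R > C + M. Define Φ(x) = F̂(x;C) + R·|1 − ⟨d, x_{[n]}⟩| + R·|x_{n+1}| for x ∈ ℝ^{n+1}, where F̂(·;C) is the Lovász extension of the lifted function f̂(·;C). Then inf_{x ∈ ℝ^{n+1}} Φ(x) = inf{F̂(x;C) : x ∈ ℝ^{n+1}, ⟨d, x_{[n]}⟩ = 1, x_{n+1} = 0}. -/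
open Finset

section Aux
variable {n : ℕ} {f : Finset (Fin n) → ℝ} {C M : ℝ}

lemma lifted_univ : lifted n f C univ = f univ := by simp [lifted]

lemma lifted_singleton_last (hn : 1 ≤ n) : lifted n f C {Fin.last n} = f ∅ + C := by
  have h0 : (Fin.castSucc (⟨0, hn⟩ : Fin n)) ∉ ({Fin.last n} : Finset (Fin (n+1))) := by
    simp [(Fin.castSucc_lt_last _).ne]; omega
  have hne : ({Fin.last n} : Finset (Fin (n+1))) ≠ univ := by
    intro h; exact h0 (h ▸ mem_univ _)
  have : (univ.filter (fun i : Fin n => i.castSucc ∈ ({Fin.last n} : Finset (Fin (n+1))))) = ∅ := by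
    apply filter_false_of_mem; intro i _; simp [(Fin.castSucc_lt_last i).ne]
  rw [lifted, if_pos (mem_singleton_self _), if_neg hne, this]

lemma lifted_erase_last : lifted n f C (univ.erase (Fin.last n)) = f univ := by
  have hl : Fin.last n ∉ univ.erase (Fin.last n) := notMem_erase _ _
  have : (univ.filter (fun i : Fin n => i.castSucc ∈ univ.erase (Fin.last n))) = univ := by
    apply filter_true_of_mem; intro i _; simp [(Fin.castSucc_lt_last i).ne]
  rw [lifted, if_neg hl, this]

lemma lifted_singleton_castSucc (i : Fin n) : lifted n f C {i.castSucc} = f {i} := by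
  have hl : Fin.last n ∉ ({i.castSucc} : Finset (Fin (n+1))) := by
    simp [((Fin.castSucc_lt_last i).ne).symm]
  have : (univ.filter (fun k : Fin n => k.castSucc ∈ ({i.castSucc} : Finset (Fin (n+1))))) = {i} := by
    ext k; simp [Fin.castSucc_inj]
  rw [lifted, if_neg hl, this]

lemma lifted_erase_castSucc (i : Fin n) :
    lifted n f C (univ.erase i.castSucc) = f (univ.erase i) + C := by
  have hl : Fin.last n ∈ univ.erase i.castSucc := by
    simp [((Fin.castSucc_lt_last i).ne).symm]
  have hne : (univ.erase i.castSucc : Finset (Fin (n+1))) ≠ univ := by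
    exact (erase_ssubset (mem_univ _)).ne
  have : (univ.filter (fun k : Fin n => k.castSucc ∈ univ.erase i.castSucc)) = univ.erase i := by
    ext k; simp [Fin.castSucc_inj]
  rw [lifted, if_pos hl, if_neg hne, this]

section Bounds
variable (hfnn : ∀ S, 0 ≤ f S) (hfM : ∀ S, f S ≤ M) (hMC : M ≤ C)
include hfnn hfM hMC

lemma v0_mem : (fun j : Fin (n+1) => if j = Fin.last n then f univ else 0)
    ∈ basePoly (lifted n f C) := by
  have hM0 : 0 ≤ M := le_trans (hfnn ∅) (hfM ∅)
  constructor
  · intro S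
    rw [Finset.sum_ite_eq' S (Fin.last n) (fun _ => f univ)]
    by_cases hl : Fin.last n ∈ S
    · by_cases hu : S = univ
      · rw [if_pos hl, lifted, if_pos hl, if_pos hu]
      · rw [if_pos hl, lifted, if_pos hl, if_neg hu]
        have := hfnn (univ.filter (fun i : Fin n => i.castSucc ∈ S))
        have := hfM univ
        linarith
    · rw [if_neg hl, lifted, if_neg hl]
      exact hfnn _
  · rw [Finset.sum_ite_eq' univ (Fin.last n) (fun _ => f univ), if_pos (mem_univ _), lifted_univ]

lemma vbound (hn : 1 ≤ n) {v : Fin (n+1) → ℝ} (hv : v ∈ basePoly (lifted n f C))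
    (j : Fin (n+1)) : |v j| ≤ M + C := by
  obtain ⟨hv1, hv2⟩ := hv
  have hM0 : 0 ≤ M := le_trans (hfnn ∅) (hfM ∅)
  have hC0 : 0 ≤ C := le_trans hM0 hMC
  rw [lifted_univ] at hv2
  have hupper : v j ≤ M + C := by
    have h1 := hv1 {j}
    rw [sum_singleton] at h1
    rcases Fin.eq_castSucc_or_eq_last j with ⟨i, rfl⟩ | rfl
    · rw [lifted_singleton_castSucc] at h1
      have := hfM {i}; linarith
    · rw [lifted_singleton_last hn] at h1
      have := hfM ∅; linarith
  have hlower : -(M + C) ≤ v j := by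
    have h1 := hv1 (univ.erase j)
    have h2 : v j + ∑ k ∈ univ.erase j, v k = ∑ k, v k :=
      Finset.add_sum_erase univ v (mem_univ j)
    have hfu := hfnn univ
    rcases Fin.eq_castSucc_or_eq_last j with ⟨i, rfl⟩ | rfl
    · rw [lifted_erase_castSucc] at h1
      have := hfM (univ.erase i); linarith
    · rw [lifted_erase_last] at h1; linarith
  exact abs_le.mpr ⟨hlower, hupper⟩

lemma lovasz_bddAbove (hn : 1 ≤ n) (x : Fin (n+1) → ℝ) :
    BddAbove ((fun v : Fin (n+1) → ℝ => ∑ i, v i * x i) '' basePoly (lifted n f C)) := by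
  refine ⟨(M + C) * ∑ j, |x j|, ?_⟩
  rintro p ⟨v, hv, rfl⟩
  calc ∑ i, v i * x i ≤ ∑ i, (M + C) * |x i| := by
        refine Finset.sum_le_sum fun i _ => ?_
        calc v i * x i ≤ |v i * x i| := le_abs_self _
          _ = |v i| * |x i| := abs_mul _ _
          _ ≤ (M + C) * |x i| :=
            mul_le_mul_of_nonneg_right (vbound hfnn hfM hMC hn hv i) (abs_nonneg _)
    _ = (M + C) * ∑ j, |x j| := by rw [Finset.mul_sum]

lemma lovasz_lip (hn : 1 ≤ n) (a : Fin n) (x y : Fin (n+1) → ℝ)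
    (hxy : ∀ j, j ≠ Fin.last n → j ≠ a.castSucc → y j = x j) :
    lovasz (lifted n f C) y ≤ lovasz (lifted n f C) x
      + (M + C) * |y a.castSucc - x a.castSucc|
      + (M + C) * |y (Fin.last n) - x (Fin.last n)| := by
  have hM0 : 0 ≤ M := le_trans (hfnn ∅) (hfM ∅)
  rw [lovasz]
  apply csSup_le (Set.Nonempty.image _ ⟨_, v0_mem hfnn hfM hMC⟩)
  rintro p ⟨v, hv, rfl⟩
  have hb := vbound hfnn hfM hMC hn hv
  have key : ∑ i, v i * y i = ∑ i, v i * x i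
      + (v a.castSucc * (y a.castSucc - x a.castSucc)
        + v (Fin.last n) * (y (Fin.last n) - x (Fin.last n))) := by
    have h1 : ∑ i, v i * y i - ∑ i, v i * x i = ∑ i, v i * (y i - x i) := by
      rw [← Finset.sum_sub_distrib]; apply Finset.sum_congr rfl; intros; ring
    have h2 : ∑ i, v i * (y i - x i)
        = ∑ i : Fin n, v i.castSucc * (y i.castSucc - x i.castSucc)
          + v (Fin.last n) * (y (Fin.last n) - x (Fin.last n)) := by
      rw [Fin.sum_univ_castSucc]
    have h3 : ∑ i : Fin n, v i.castSucc * (y i.castSucc - x i.castSucc)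
        = v a.castSucc * (y a.castSucc - x a.castSucc) := by
      apply Finset.sum_eq_single a
      · intro i _ hne
        rw [hxy i.castSucc (Fin.castSucc_lt_last i).ne (by simp [Fin.castSucc_inj, hne])]
        ring
      · intro h; exact absurd (mem_univ a) h
    linarith
  have hle : ∑ i, v i * x i
      ≤ sSup ((fun v : Fin (n+1) → ℝ => ∑ i, v i * x i) '' basePoly (lifted n f C)) :=
    le_csSup (lovasz_bddAbove hfnn hfM hMC hn x) ⟨v, hv, rfl⟩
  have e1 : v a.castSucc * (y a.castSucc - x a.castSucc)
      ≤ (M + C) * |y a.castSucc - x a.castSucc| := by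
    calc _ ≤ |v a.castSucc * (y a.castSucc - x a.castSucc)| := le_abs_self _
      _ = |v a.castSucc| * |y a.castSucc - x a.castSucc| := abs_mul _ _
      _ ≤ _ := mul_le_mul_of_nonneg_right (hb _) (abs_nonneg _)
  have e2 : v (Fin.last n) * (y (Fin.last n) - x (Fin.last n))
      ≤ (M + C) * |y (Fin.last n) - x (Fin.last n)| := by
    calc _ ≤ |v (Fin.last n) * (y (Fin.last n) - x (Fin.last n))| := le_abs_self _
      _ = |v (Fin.last n)| * |y (Fin.last n) - x (Fin.last n)| := abs_mul _ _
      _ ≤ _ := mul_le_mul_of_nonneg_right (hb _) (abs_nonneg _)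
  simp only [lovasz]
  linarith

end Bounds
end Aux

set_option linter.unusedVariables false in
/-- The unconstrained lifted penalized problem has the same optimal value as the
constrained problem `inf {F̂(x;C) : ⟨d, x_{[n]}⟩ = 1, x_{n+1} = 0}`. -/
theorem lifted_penalized_eq_constrained (n : ℕ) (hn : 1 ≤ n)
    (f : Finset (Fin n) → ℤ) (M : ℝ)
    (hsub : Submodular (fun S => (f S : ℝ))) (hf0 : f ∅ = 0)
    (hfnn : ∀ S, 0 ≤ (f S : ℝ)) (hfM : ∀ S, (f S : ℝ) ≤ M)
    (d : Fin n → ℤ) (hd : d ≠ 0)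
    (C : ℝ) (hC : M * ((∑ i, |(d i : ℝ)|) + 1) ≤ C)
    (R : ℝ) (hR : C + M < R) :
    sInf (Set.range (fun x : Fin (n + 1) → ℝ =>
        lovasz (lifted n (fun S => (f S : ℝ)) C) x +
          (R * |1 - ∑ i : Fin n, (d i : ℝ) * x i.castSucc| + R * |x (Fin.last n)|))) =
      sInf {r : ℝ | ∃ x : Fin (n + 1) → ℝ,
        (∑ i : Fin n, (d i : ℝ) * x i.castSucc) = 1 ∧ x (Fin.last n) = 0 ∧
        r = lovasz (lifted n (fun S => (f S : ℝ)) C) x} := by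
  set f' : Finset (Fin n) → ℝ := fun S => (f S : ℝ) with hf'
  set g : Finset (Fin (n+1)) → ℝ := lifted n f' C with hgdef
  have hM0 : 0 ≤ M := le_trans (hfnn ∅) (hfM ∅)
  have habs : (0:ℝ) ≤ ∑ i, |(d i : ℝ)| := Finset.sum_nonneg fun _ _ => abs_nonneg _
  have hMC : M ≤ C := by nlinarith
  have hC0 : 0 ≤ C := le_trans hM0 hMC
  obtain ⟨e, he⟩ : ∃ e, d e ≠ 0 := by
    by_contra h; push_neg at h; exact hd (funext h)
  have hde1 : (1:ℝ) ≤ |(d e : ℝ)| := by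
    have := Int.one_le_abs he; exact_mod_cast this
  have hdne : (d e : ℝ) ≠ 0 := Int.cast_ne_zero.mpr he
  have hclast : (Fin.last n : Fin (n+1)) ≠ e.castSucc := ((Fin.castSucc_lt_last e).ne).symm
  -- lower bound for lovasz
  have hlov_lb : ∀ x : Fin (n+1) → ℝ, (f univ : ℝ) * x (Fin.last n) ≤ lovasz g x := by
    intro x
    have h := le_csSup (lovasz_bddAbove hfnn hfM hMC hn x)
      (Set.mem_image_of_mem _ (v0_mem hfnn hfM hMC))
    have hcalc : ∑ i, (if i = Fin.last n then (f' univ) else 0) * x i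
        = (f univ : ℝ) * x (Fin.last n) := by
      simp [ite_mul, Finset.sum_ite_eq', hf']
    rw [lovasz] at *
    calc (f univ : ℝ) * x (Fin.last n)
        = ∑ i, (if i = Fin.last n then (f' univ) else 0) * x i := hcalc.symm
      _ ≤ _ := h
  -- the constrained set
  set T : Set ℝ := {r : ℝ | ∃ x : Fin (n + 1) → ℝ,
      (∑ i : Fin n, (d i : ℝ) * x i.castSucc) = 1 ∧ x (Fin.last n) = 0 ∧
      r = lovasz g x} with hT
  have hT_lb : ∀ r ∈ T, (0:ℝ) ≤ r := by
    rintro r ⟨x, hx1, hx2, rfl⟩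
    have h := hlov_lb x
    rw [hx2, mul_zero] at h
    exact h
  -- x0 witness
  set x0 : Fin (n+1) → ℝ := fun j => if j = e.castSucc then ((d e : ℝ))⁻¹ else 0 with hx0
  have hx0last : x0 (Fin.last n) = 0 := if_neg hclast
  have hx0sum : ∑ i : Fin n, (d i : ℝ) * x0 i.castSucc = 1 := by
    rw [Finset.sum_eq_single e]
    · simp [hx0, hdne]
    · intro i _ hne
      have : x0 i.castSucc = 0 := if_neg (by simp [Fin.castSucc_inj, hne])
      rw [this, mul_zero]
    · intro h; exact absurd (mem_univ e) h
  have hT_ne : T.Nonempty := ⟨lovasz g x0, x0, hx0sum, hx0last, rfl⟩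
  have hfuabs : |(f univ : ℝ)| ≤ M := by
    rw [abs_of_nonneg (hfnn univ)]; exact hfM univ
  have hΦ_lb : ∀ x : Fin (n+1) → ℝ, (0:ℝ) ≤ lovasz g x +
      (R * |1 - ∑ i : Fin n, (d i : ℝ) * x i.castSucc| + R * |x (Fin.last n)|) := by
    intro x
    have h1 := hlov_lb x
    have h2 : |(f univ : ℝ) * x (Fin.last n)| ≤ M * |x (Fin.last n)| := by
      rw [abs_mul]; exact mul_le_mul_of_nonneg_right hfuabs (abs_nonneg _)
    have h3 := neg_abs_le ((f univ : ℝ) * x (Fin.last n))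
    have h4 : M * |x (Fin.last n)| ≤ R * |x (Fin.last n)| :=
      mul_le_mul_of_nonneg_right (by linarith) (abs_nonneg _)
    have h5 : (0:ℝ) ≤ R * |1 - ∑ i : Fin n, (d i : ℝ) * x i.castSucc| :=
      mul_nonneg (by linarith) (abs_nonneg _)
    linarith
  apply le_antisymm
  · apply csInf_le_csInf ⟨0, ?_⟩ hT_ne
    · rintro r ⟨x, hx1, hx2, rfl⟩
      refine ⟨x, ?_⟩
      simp [hx1, hx2]
    · rintro b ⟨x, rfl⟩
      exact hΦ_lb x
  · apply le_csInf (Set.range_nonempty _)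
    rintro b ⟨x, rfl⟩
    set t := ∑ i : Fin n, (d i : ℝ) * x i.castSucc with ht
    set δ := (1 - t) / (d e : ℝ) with hδ
    set y : Fin (n+1) → ℝ := fun j => if j = Fin.last n then 0
      else if j = e.castSucc then x e.castSucc + δ else x j with hy
    have hylast : y (Fin.last n) = 0 := if_pos rfl
    have hye : y e.castSucc = x e.castSucc + δ := by
      simp [hy, (Fin.castSucc_lt_last e).ne]
    have hyother : ∀ j, j ≠ Fin.last n → j ≠ e.castSucc → y j = x j := by
      intro j h1 h2; rw [hy]; simp only; rw [if_neg h1, if_neg h2]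
    have hysum : ∑ i : Fin n, (d i : ℝ) * y i.castSucc = 1 := by
      have hterm : ∀ i : Fin n, (d i : ℝ) * y i.castSucc
          = (d i : ℝ) * x i.castSucc + (if i = e then (d e : ℝ) * δ else 0) := by
        intro i
        by_cases hie : i = e
        · subst hie; rw [hye, if_pos rfl]; ring
        · rw [hyother i.castSucc (Fin.castSucc_lt_last i).ne
            (by simp [Fin.castSucc_inj, hie]), if_neg hie, add_zero]
      rw [Finset.sum_congr rfl (fun i _ => hterm i), Finset.sum_add_distrib,
        Finset.sum_ite_eq' univ e (fun _ => (d e : ℝ) * δ), if_pos (mem_univ e)]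
      have : (d e : ℝ) * δ = 1 - t := by
        rw [hδ]; field_simp
      rw [← ht, this]; ring
    have hδle : |δ| ≤ |1 - t| := by
      rw [hδ, abs_div]
      exact div_le_self (abs_nonneg _) hde1
    have hlip := lovasz_lip hfnn hfM hMC hn e x y hyother
    have hb1 : |y e.castSucc - x e.castSucc| = |δ| := by rw [hye]; ring_nf
    have hb2 : |y (Fin.last n) - x (Fin.last n)| = |x (Fin.last n)| := by
      rw [hylast, zero_sub, abs_neg]
    have hmem : lovasz g y ∈ T := ⟨y, hysum, hylast, rfl⟩
    have hstep : lovasz g y ≤ lovasz g x + (R * |1 - t| + R * |x (Fin.last n)|) := by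
      have c1 : (M + C) * |δ| ≤ R * |1 - t| := by
        calc (M + C) * |δ| ≤ (M + C) * |1 - t| :=
              mul_le_mul_of_nonneg_left hδle (by linarith)
          _ ≤ R * |1 - t| := mul_le_mul_of_nonneg_right (by linarith) (abs_nonneg _)
      have c2 : (M + C) * |x (Fin.last n)| ≤ R * |x (Fin.last n)| :=
        mul_le_mul_of_nonneg_right (by linarith) (abs_nonneg _)
      rw [hb1, hb2] at hlip
      linarith
    calc sInf T ≤ lovasz g y := csInf_le ⟨0, hT_lb⟩ hmem
      _ ≤ _ := hstep
end

section
/- Let f : 2^E → ℝ be submodular with f(∅) = 0, and let C ≥ 0. Then for every x ∈ ℝ^n with x ≥ 0 coordinatewise, the Lovász extension of the lifted function agrees with that of f: F̂((x_1,…,x_n, 0); C) = F(x), where F is the Lovász extension of f and F̂(·;C) is the Lovász extension of f̂(·;C). -/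
open Finset

namespace LiftedAux

variable {n : ℕ}

/-- Prefix set of the first `k` elements in the order given by `σ`. -/
def prefSet (σ : Equiv.Perm (Fin n)) (k : ℕ) : Finset (Fin n) :=
  univ.filter (fun i => (σ.symm i : ℕ) < k)

lemma mem_prefSet {σ : Equiv.Perm (Fin n)} {k : ℕ} {i : Fin n} :
    i ∈ prefSet σ k ↔ (σ.symm i : ℕ) < k := by
  simp [prefSet]

lemma prefSet_zero (σ : Equiv.Perm (Fin n)) : prefSet σ 0 = ∅ := by
  ext i; simp [mem_prefSet]

lemma prefSet_top (σ : Equiv.Perm (Fin n)) : prefSet σ n = univ := by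
  ext i; simp [mem_prefSet, (σ.symm i).isLt]

lemma notMem_prefSet_self (σ : Equiv.Perm (Fin n)) {k : ℕ} (hk : k < n) :
    σ ⟨k, hk⟩ ∉ prefSet σ k := by
  simp [mem_prefSet]

lemma prefSet_succ (σ : Equiv.Perm (Fin n)) {k : ℕ} (hk : k < n) :
    prefSet σ (k + 1) = insert (σ ⟨k, hk⟩) (prefSet σ k) := by
  ext i
  simp only [mem_prefSet, Finset.mem_insert, Nat.lt_succ_iff_lt_or_eq]
  constructor
  · rintro (h | h)
    · exact Or.inr h
    · left
      have : σ.symm i = ⟨k, hk⟩ := Fin.ext h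
      rw [← this, Equiv.apply_symm_apply]
  · rintro (h | h)
    · right; subst h; simp
    · exact Or.inl h

/-- Greedy vector for the order `σ`. -/
noncomputable def greedy (f : Finset (Fin n) → ℝ) (σ : Equiv.Perm (Fin n)) : Fin n → ℝ :=
  fun i => f (prefSet σ ((σ.symm i : ℕ) + 1)) - f (prefSet σ (σ.symm i))

lemma sum_greedy_prefSet (f : Finset (Fin n) → ℝ) (hf0 : f ∅ = 0) (σ : Equiv.Perm (Fin n)) :
    ∀ k, k ≤ n → ∑ i ∈ prefSet σ k, greedy f σ i = f (prefSet σ k) := by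
  intro k
  induction k with
  | zero => intro _; simp [prefSet_zero, hf0]
  | succ k ih =>
    intro hk1
    have hk : k < n := hk1
    rw [prefSet_succ σ hk, Finset.sum_insert (notMem_prefSet_self σ hk),
      ih (le_of_lt hk)]
    have hg : greedy f σ (σ ⟨k, hk⟩)
        = f (prefSet σ (k + 1)) - f (prefSet σ k) := by
      simp [greedy]
    rw [hg, prefSet_succ σ hk]
    ring

lemma sum_greedy_univ (f : Finset (Fin n) → ℝ) (hf0 : f ∅ = 0) (σ : Equiv.Perm (Fin n)) :
    ∑ i, greedy f σ i = f univ := by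
  have h := sum_greedy_prefSet f hf0 σ n le_rfl
  rwa [prefSet_top] at h

lemma sum_greedy_le (f : Finset (Fin n) → ℝ) (hsub : Submodular f) (hf0 : f ∅ = 0)
    (σ : Equiv.Perm (Fin n)) (S : Finset (Fin n)) :
    ∑ i ∈ S, greedy f σ i ≤ f S := by
  have key : ∀ k, k ≤ n → ∀ T : Finset (Fin n), T ⊆ prefSet σ k →
      ∑ i ∈ T, greedy f σ i ≤ f T := by
    intro k
    induction k with
    | zero =>
      intro _ T hT
      have hTe : T = ∅ := by
        rw [prefSet_zero] at hT
        exact Finset.subset_empty.mp hT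
      simp [hTe, hf0]
    | succ k ih =>
      intro hk1 T hT
      have hk : k < n := hk1
      set j := σ ⟨k, hk⟩ with hj
      by_cases hjT : j ∈ T
      · have hT' : T.erase j ⊆ prefSet σ k := by
          intro i hi
          have hiT := Finset.mem_of_mem_erase hi
          have hij := Finset.ne_of_mem_erase hi
          have hmem := hT hiT
          rw [prefSet_succ σ hk, Finset.mem_insert] at hmem
          rcases hmem with h | h
          · exact absurd h hij
          · exact h
        have h1 : ∑ i ∈ T.erase j, greedy f σ i ≤ f (T.erase j) :=
          ih (le_of_lt hk) _ hT'
        have hsum : ∑ i ∈ T, greedy f σ i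
            = greedy f σ j + ∑ i ∈ T.erase j, greedy f σ i := by
          rw [← Finset.sum_insert (Finset.notMem_erase j T),
            Finset.insert_erase hjT]
        have hgj : greedy f σ j = f (prefSet σ (k + 1)) - f (prefSet σ k) := by
          simp [greedy, hj]
        have hcap : T ∩ prefSet σ k = T.erase j := by
          ext i
          simp only [Finset.mem_inter, Finset.mem_erase]
          constructor
          · rintro ⟨h1', h2'⟩
            refine ⟨?_, h1'⟩
            rintro rfl
            exact notMem_prefSet_self σ hk h2'
          · rintro ⟨h1', h2'⟩
            refine ⟨h2', ?_⟩
            have hmem := hT h2'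
            rw [prefSet_succ σ hk, Finset.mem_insert] at hmem
            rcases hmem with h | h
            · exact absurd h h1'
            · exact h
        have hcup : T ∪ prefSet σ k = prefSet σ (k + 1) := by
          rw [prefSet_succ σ hk]
          apply Finset.Subset.antisymm
          · intro i hi
            rcases Finset.mem_union.mp hi with h | h
            · rw [← prefSet_succ σ hk]; exact hT h
            · exact Finset.mem_insert_of_mem h
          · intro i hi
            rcases Finset.mem_insert.mp hi with h | h
            · subst h; exact Finset.mem_union_left _ hjT
            · exact Finset.mem_union_right _ h
        have hsubm := hsub T (prefSet σ k)
        rw [hcap, hcup] at hsubm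
        rw [hsum, hgj]
        linarith
      · have hT' : T ⊆ prefSet σ k := by
          intro i hi
          have hmem := hT hi
          rw [prefSet_succ σ hk, Finset.mem_insert] at hmem
          rcases hmem with h | h
          · subst h; exact absurd hi hjT
          · exact h
        exact ih (le_of_lt hk) T hT'
  have hS : S ⊆ prefSet σ n := by rw [prefSet_top]; exact Finset.subset_univ S
  exact key n le_rfl S hS

lemma greedy_mem_base (f : Finset (Fin n) → ℝ) (hsub : Submodular f) (hf0 : f ∅ = 0)
    (σ : Equiv.Perm (Fin n)) : greedy f σ ∈ basePoly f :=
  ⟨fun S => sum_greedy_le f hsub hf0 σ S, sum_greedy_univ f hf0 σ⟩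

/-- Dominance: any point of the extended polymatroid has inner product with a
nonnegative, `σ`-sorted `x` at most that of the greedy vector. -/
lemma dominance (f : Finset (Fin n) → ℝ) (hf0 : f ∅ = 0)
    (σ : Equiv.Perm (Fin n)) (x : Fin n → ℝ) (hx : ∀ i, 0 ≤ x i)
    (hsort : ∀ j k : Fin n, j ≤ k → x (σ k) ≤ x (σ j))
    (z : Fin n → ℝ) (hz : ∀ S : Finset (Fin n), ∑ i ∈ S, z i ≤ f S) :
    ∑ i, z i * x i ≤ ∑ i, greedy f σ i * x i := by
  set d : Fin n → ℝ := fun i => z i - greedy f σ i with hd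
  set x' : ℕ → ℝ := fun k => if h : k < n then x (σ ⟨k, h⟩) else 0 with hx'
  have hdP : ∀ k, k ≤ n → ∑ i ∈ prefSet σ k, d i ≤ 0 := by
    intro k hk
    have h1 : ∑ i ∈ prefSet σ k, d i
        = ∑ i ∈ prefSet σ k, z i - ∑ i ∈ prefSet σ k, greedy f σ i := by
      simp [hd, Finset.sum_sub_distrib]
    rw [h1, sum_greedy_prefSet f hf0 σ k hk]
    linarith [hz (prefSet σ k)]
  have hx'anti : ∀ k, k < n → x' (k + 1) ≤ x' k := by
    intro k hk
    by_cases h : k + 1 < n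
    · have hs := hsort ⟨k, hk⟩ ⟨k + 1, h⟩ (by simp [Fin.le_def])
      simp only [hx', dif_pos hk, dif_pos h]
      exact hs
    · simp only [hx', dif_pos hk, dif_neg h]
      exact hx _
  have key : ∀ k, k ≤ n →
      ∑ i ∈ prefSet σ k, d i * x i ≤ x' k * ∑ i ∈ prefSet σ k, d i := by
    intro k
    induction k with
    | zero => intro _; simp [prefSet_zero]
    | succ k ih =>
      intro hk1
      have hk : k < n := hk1
      set j := σ ⟨k, hk⟩ with hj
      have hxj : x j = x' k := by simp [hx', dif_pos hk, hj]
      rw [prefSet_succ σ hk, Finset.sum_insert (notMem_prefSet_self σ hk),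
        Finset.sum_insert (notMem_prefSet_self σ hk)]
      have h1 : d j * x j + ∑ i ∈ prefSet σ k, d i * x i
          ≤ x' k * (d j + ∑ i ∈ prefSet σ k, d i) := by
        have hih := ih (le_of_lt hk)
        rw [hxj]
        nlinarith [ih (le_of_lt hk)]
      have hs : d j + ∑ i ∈ prefSet σ k, d i ≤ 0 := by
        have hdk := hdP (k + 1) hk1
        rw [prefSet_succ σ hk, Finset.sum_insert (notMem_prefSet_self σ hk)] at hdk
        exact hdk
      have h2 : x' k * (d j + ∑ i ∈ prefSet σ k, d i)
          ≤ x' (k + 1) * (d j + ∑ i ∈ prefSet σ k, d i) :=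
        mul_le_mul_of_nonpos_right (hx'anti k hk) hs
      linarith
  have hfinal := key n le_rfl
  rw [prefSet_top] at hfinal
  have hx'n : x' n = 0 := by simp [hx']
  rw [hx'n, zero_mul] at hfinal
  have hsplit : ∑ i, d i * x i = ∑ i, z i * x i - ∑ i, greedy f σ i * x i := by
    simp [hd, sub_mul, Finset.sum_sub_distrib]
  linarith

end LiftedAux

/-- On the nonnegative orthant with last coordinate `0`, the Lovász extension of the
lifted function agrees with the Lovász extension of `f`. -/
theorem lifted_lovasz_agrees (n : ℕ) (hn : 1 ≤ n) (f : Finset (Fin n) → ℝ)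
    (hsub : Submodular f) (hf0 : f ∅ = 0) (C : ℝ) (hC : 0 ≤ C)
    (x : Fin n → ℝ) (hx : ∀ i, 0 ≤ x i) :
    lovasz (lifted n f C) (Fin.snoc x 0) = lovasz f x := by
  classical
  set y : Fin (n + 1) → ℝ := Fin.snoc x 0 with hy
  set σ : Equiv.Perm (Fin n) := Fin.revPerm.trans (Tuple.sort x) with hσ
  have hsort : ∀ j k : Fin n, j ≤ k → x (σ k) ≤ x (σ j) := by
    intro j k hjk
    have hrev : k.rev ≤ j.rev := Fin.rev_le_rev.mpr hjk
    have := Tuple.monotone_sort x hrev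
    simpa [hσ, Equiv.trans_apply, Fin.revPerm_apply] using this
  set g := LiftedAux.greedy f σ with hg
  have hgbase : g ∈ basePoly f := LiftedAux.greedy_mem_base f hsub hf0 σ
  set G : ℝ := ∑ i, g i * x i with hG
  set emb : Fin n ↪ Fin (n + 1) := ⟨Fin.castSucc, Fin.castSucc_injective n⟩ with hemb
  have hfilter : ∀ S : Finset (Fin n),
      univ.filter (fun i : Fin n => i.castSucc ∈ S.map emb) = S := by
    intro S
    ext i
    simp only [Finset.mem_filter, Finset.mem_univ, true_and, Finset.mem_map, hemb,
      Function.Embedding.coeFn_mk]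
    constructor
    · rintro ⟨a, ha, hai⟩
      rwa [← Fin.castSucc_injective n hai]
    · intro hi; exact ⟨i, hi, rfl⟩
  have hlast : ∀ S : Finset (Fin n), Fin.last n ∉ S.map emb := by
    intro S h
    simp only [Finset.mem_map, hemb, Function.Embedding.coeFn_mk] at h
    obtain ⟨a, _, ha⟩ := h
    exact (Fin.castSucc_lt_last a).ne ha
  -- restricting a point of the lifted polytope gives a point of `P(f)`
  have hz_of_w : ∀ w : Fin (n + 1) → ℝ, w ∈ basePoly (lifted n f C) →
      ∀ S : Finset (Fin n), ∑ i ∈ S, w i.castSucc ≤ f S := by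
    intro w hw S
    have h1 := hw.1 (S.map emb)
    rw [Finset.sum_map] at h1
    have hl : lifted n f C (S.map emb) = f S := by
      rw [lifted, if_neg (hlast S), hfilter S]
    rw [hl] at h1
    simpa [hemb] using h1
  have hval_w : ∀ w : Fin (n + 1) → ℝ,
      ∑ i, w i * y i = ∑ i : Fin n, w i.castSucc * x i := by
    intro w
    rw [Fin.sum_univ_castSucc]
    simp [hy, Fin.snoc_castSucc, Fin.snoc_last]
  -- the lifted greedy vector
  set gh : Fin (n + 1) → ℝ := Fin.snoc g 0 with hgh
  have hsum_gh : ∀ S : Finset (Fin (n + 1)),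
      ∑ j ∈ S, gh j = ∑ i ∈ univ.filter (fun i : Fin n => i.castSucc ∈ S), g i := by
    intro S
    have h0 : ∑ j ∈ S, gh j = ∑ j ∈ S.erase (Fin.last n), gh j := by
      by_cases h : Fin.last n ∈ S
      · rw [← Finset.insert_erase h, Finset.sum_insert (Finset.notMem_erase _ _)]
        simp [hgh, Fin.snoc_last]
      · rw [Finset.erase_eq_of_notMem h]
    have h1 : S.erase (Fin.last n)
        = (univ.filter (fun i : Fin n => i.castSucc ∈ S)).map emb := by
      ext j
      simp only [Finset.mem_erase, Finset.mem_map, Finset.mem_filter, Finset.mem_univ,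
        true_and, hemb, Function.Embedding.coeFn_mk]
      constructor
      · rintro ⟨hne, hj⟩
        obtain ⟨i, rfl⟩ := Fin.exists_castSucc_eq.mpr hne
        exact ⟨i, hj, rfl⟩
      · rintro ⟨i, hi, rfl⟩
        exact ⟨(Fin.castSucc_lt_last i).ne, hi⟩
    rw [h0, h1, Finset.sum_map]
    simp [hgh, hemb, Fin.snoc_castSucc]
  have hfilter_univ : univ.filter (fun i : Fin n => i.castSucc ∈ (univ : Finset (Fin (n+1)))) = univ := by
    ext i; simp
  have hghbase : gh ∈ basePoly (lifted n f C) := by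
    constructor
    · intro S
      rw [hsum_gh S]
      have hle := hgbase.1 (univ.filter (fun i : Fin n => i.castSucc ∈ S))
      rw [lifted]
      split_ifs with h1 h2
      · subst h2
        rw [hfilter_univ]
        exact le_of_eq hgbase.2
      · linarith
      · exact hle
    · rw [hsum_gh univ, hfilter_univ, lifted, if_pos (Finset.mem_univ _), if_pos rfl]
      exact hgbase.2
  have hvalgh : ∑ i, gh i * y i = G := by
    rw [hval_w gh]
    simp [hgh, Fin.snoc_castSucc, hG]
  have hubA : ∀ a ∈ (fun v : Fin (n+1) → ℝ => ∑ i, v i * y i) '' basePoly (lifted n f C),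
      a ≤ G := by
    rintro a ⟨w, hw, rfl⟩
    dsimp only
    rw [hval_w w]
    exact LiftedAux.dominance f hf0 σ x hx hsort _ (hz_of_w w hw)
  have hubB : ∀ a ∈ (fun v : Fin n → ℝ => ∑ i, v i * x i) '' basePoly f, a ≤ G := by
    rintro a ⟨v, hv, rfl⟩
    exact LiftedAux.dominance f hf0 σ x hx hsort v hv.1
  have hA : lovasz (lifted n f C) y = G := by
    unfold lovasz
    exact IsGreatest.csSup_eq ⟨⟨gh, hghbase, hvalgh⟩, hubA⟩
  have hB : lovasz f x = G := by
    unfold lovasz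
    exact IsGreatest.csSup_eq ⟨⟨g, hgbase, rfl⟩, hubB⟩
  rw [hA, hB]
end

section
/- Let f : 2^E → ℤ, d ∈ ℤ^n, and 0 < ε ≤ 1/‖d‖₁². For any S₁, S₂ ⊆ E with d(S₁) > 0 and d(S₂) > 0: if f(S₁)/d(S₁) < f(S₂)/d(S₂), then (f(S₁) + ε)/d(S₁) < (f(S₂) + ε)/d(S₂) (the additive perturbation f ↦ f + ε preserves the strict ordering of the candidate line search ratios). -/
open Finset

/-- The additive perturbation `f ↦ f + ε` with `0 < ε ≤ 1/‖d‖₁²` preserves the strict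
ordering of the candidate line search ratios. -/
theorem perturbation_preserves_order (n : ℕ) (hn : 1 ≤ n) (f : Finset (Fin n) → ℤ)
    (d : Fin n → ℤ) (ε : ℝ) (hε : 0 < ε) (hε' : ε ≤ 1 / (∑ i, |(d i : ℝ)|) ^ 2)
    (S₁ S₂ : Finset (Fin n)) (h₁ : 0 < ∑ i ∈ S₁, d i) (h₂ : 0 < ∑ i ∈ S₂, d i)
    (hlt : (f S₁ : ℝ) / ((∑ i ∈ S₁, d i : ℤ) : ℝ) <
      (f S₂ : ℝ) / ((∑ i ∈ S₂, d i : ℤ) : ℝ)) :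
    ((f S₁ : ℝ) + ε) / ((∑ i ∈ S₁, d i : ℤ) : ℝ) <
      ((f S₂ : ℝ) + ε) / ((∑ i ∈ S₂, d i : ℤ) : ℝ) := by
  set D₁ : ℤ := ∑ i ∈ S₁, d i with hD₁
  set D₂ : ℤ := ∑ i ∈ S₂, d i with hD₂
  have hd1 : (0:ℝ) < (D₁:ℝ) := by exact_mod_cast h₁
  have hd2 : (0:ℝ) < (D₂:ℝ) := by exact_mod_cast h₂
  set L : ℝ := ∑ i, |(d i : ℝ)| with hL
  have hD2L : (D₂:ℝ) ≤ L := by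
    calc (D₂:ℝ) = ∑ i ∈ S₂, (d i : ℝ) := by push_cast [hD₂]; ring
    _ ≤ ∑ i ∈ S₂, |(d i : ℝ)| := Finset.sum_le_sum fun i _ => le_abs_self _
    _ ≤ L := Finset.sum_le_sum_of_subset_of_nonneg (Finset.subset_univ _)
        (fun i _ _ => abs_nonneg _)
  have hD2one : (1:ℝ) ≤ (D₂:ℝ) := by exact_mod_cast h₂
  have hD1one : (1:ℝ) ≤ (D₁:ℝ) := by exact_mod_cast h₁
  have hLone : (1:ℝ) ≤ L := le_trans hD2one hD2L
  have hLpos : (0:ℝ) < L ^ 2 := by positivity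
  have hεL : ε * L ^ 2 ≤ 1 := by
    rw [le_div_iff₀ hLpos] at hε'
    linarith
  -- integer inequality from hlt
  have hZ : f S₁ * D₂ + 1 ≤ f S₂ * D₁ := by
    have : (f S₁ : ℝ) * (D₂:ℝ) < (f S₂:ℝ) * (D₁:ℝ) := by
      rw [div_lt_div_iff₀ hd1 hd2] at hlt; exact hlt
    have : f S₁ * D₂ < f S₂ * D₁ := by exact_mod_cast this
    omega
  have hZR : (f S₁ : ℝ) * (D₂:ℝ) + 1 ≤ (f S₂:ℝ) * (D₁:ℝ) := by exact_mod_cast hZ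
  rw [div_lt_div_iff₀ hd1 hd2]
  have key : ε * (D₂:ℝ) - ε * (D₁:ℝ) < 1 := by
    nlinarith [mul_le_mul_of_nonneg_left hD2L hε.le,
      mul_le_mul_of_nonneg_left hLone (mul_nonneg hε.le (le_trans zero_le_one hLone))]
  nlinarith
end
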